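/- arXiv:0911.1767 — 12 statements merged into one kernel-verified Lean document; each statement's English description precedes it below -/
import Mathlib

section
/- For any two message vectors α⁰, β⁰ ∈ [0,W]^{2|E|}, one step of the natural dynamics never expands the sup-norm distance: if α¹ and β¹ are obtained from α⁰ and β⁰ respectively by one update of the natural dynamics (with the same damping factor κ ∈ (0,1)), then ‖α¹ − β¹‖_∞ ≤ ‖α⁰ − β⁰‖_∞. -/
open Finset Filter Topology

/-- The offer `m_{i→j}` computed from message vector `α`:
`m_{i→j} = (w_{ij} − α_{i→j})₊ − (1/2)(w_{ij} − α_{i→j} − α_{j→i})₊`. -/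
noncomputable def offer {V : Type*} (w α : V → V → ℝ) (i j : V) : ℝ :=
  max (w i j - α i j) 0 - (1 / 2) * max (w i j - α i j - α j i) 0

/-- `max_{k ∈ ∂i ∖ {j}} m_{k→i}` (max over the empty set is 0). -/
noncomputable def bestAlt {V : Type*} [Fintype V] [DecidableEq V]
    (Adj : V → V → Prop) [DecidableRel Adj] (w α : V → V → ℝ) (i j : V) : ℝ :=
  (Finset.univ.filter fun k => Adj i k ∧ k ≠ j).fold max 0 fun k => offer w α k i

/-- Earnings `γ_i = max_{k ∈ ∂i} m_{k→i}` (max over the empty set is 0). -/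
noncomputable def earn {V : Type*} [Fintype V]
    (Adj : V → V → Prop) [DecidableRel Adj] (w α : V → V → ℝ) (i : V) : ℝ :=
  (Finset.univ.filter fun k => Adj i k).fold max 0 fun k => offer w α k i

/-- One step of the natural dynamics with damping factor `κ`:
`α'_{i→j} = κ · max_{k∈∂i∖{j}} m_{k→i} + (1−κ) · α_{i→j}`. -/
noncomputable def step {V : Type*} [Fintype V] [DecidableEq V]
    (Adj : V → V → Prop) [DecidableRel Adj] (w : V → V → ℝ) (κ : ℝ)
    (α : V → V → ℝ) : V → V → ℝ :=
  fun i j => κ * bestAlt Adj w α i j + (1 - κ) * α i j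

/-- A fixed point of the natural dynamics: the message vector is unchanged by the update. -/
def IsFixedPoint {V : Type*} [Fintype V] [DecidableEq V]
    (Adj : V → V → Prop) [DecidableRel Adj] (w : V → V → ℝ) (κ : ℝ)
    (α : V → V → ℝ) : Prop :=
  ∀ i j, Adj i j → step Adj w κ α i j = α i j

/-- `W`, the maximum edge weight. -/
noncomputable def maxW {V : Type*} [Fintype V]
    (Adj : V → V → Prop) [DecidableRel Adj] (w : V → V → ℝ) : ℝ :=
  ((Finset.univ ×ˢ Finset.univ).filter fun p : V × V => Adj p.1 p.2).fold max 0
    fun p => w p.1 p.2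

/-- A valid message vector: `α ∈ [0, W]^{2|E|}`. -/
def ValidMsg {V : Type*} [Fintype V]
    (Adj : V → V → Prop) [DecidableRel Adj] (w : V → V → ℝ) (α : V → V → ℝ) : Prop :=
  ∀ i j, Adj i j → α i j ∈ Set.Icc (0 : ℝ) (maxW Adj w)

/-- `G = (V, E)` is a finite simple graph with symmetric positive edge weights. -/
def GoodGraph {V : Type*} (Adj : V → V → Prop) (w : V → V → ℝ) : Prop :=
  (∀ i j, Adj i j → Adj j i) ∧ (∀ i, ¬Adj i i) ∧ (∀ i j, w i j = w j i) ∧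
  (∀ i j, Adj i j → 0 < w i j)

/-- The sup-norm distance between two message vectors, taken over all directed edges. -/
noncomputable def msgDist {V : Type*} [Fintype V]
    (Adj : V → V → Prop) [DecidableRel Adj] (α β : V → V → ℝ) : ℝ :=
  ((Finset.univ ×ˢ Finset.univ).filter fun p : V × V => Adj p.1 p.2).fold max 0
    fun p => |α p.1 p.2 - β p.1 p.2|

section Aux
open Finset

lemma offer_lip (w a b a' b' : ℝ) :
    |(max (w - a) 0 - (1/2) * max (w - a - b) 0) -
      (max (w - a') 0 - (1/2) * max (w - a' - b') 0)| ≤ max |a - a'| |b - b'| := by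
  have h1 : |a - a'| ≤ max |a - a'| |b - b'| := le_max_left _ _
  have h2 : |b - b'| ≤ max |a - a'| |b - b'| := le_max_right _ _
  have ha := abs_le.mp (le_refl |a - a'|)
  have hb := abs_le.mp (le_refl |b - b'|)
  rw [abs_le]
  rcases max_cases (w - a) 0 with ⟨e1, c1⟩ | ⟨e1, c1⟩ <;>
    rcases max_cases (w - a - b) 0 with ⟨e2, c2⟩ | ⟨e2, c2⟩ <;>
    rcases max_cases (w - a') 0 with ⟨e3, c3⟩ | ⟨e3, c3⟩ <;>
    rcases max_cases (w - a' - b') 0 with ⟨e4, c4⟩ | ⟨e4, c4⟩ <;>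
    rw [e1, e2, e3, e4] <;> constructor <;> linarith

lemma fold_max_lip {ι : Type*} (s : Finset ι) (f g : ι → ℝ) (D : ℝ) (hD : 0 ≤ D)
    (h : ∀ k ∈ s, |f k - g k| ≤ D) :
    |s.fold max 0 f - s.fold max 0 g| ≤ D := by
  induction s using Finset.cons_induction with
  | empty => simpa using hD
  | cons a s ha ih =>
    rw [Finset.fold_cons, Finset.fold_cons]
    refine le_trans (abs_max_sub_max_le_max _ _ _ _) (max_le ?_ ?_)
    · exact h a (Finset.mem_cons_self a s)
    · exact ih fun k hk => h k (Finset.mem_cons.mpr (Or.inr hk))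

lemma le_fold_max_of_mem {ι : Type*} {s : Finset ι} {f : ι → ℝ} {k : ι} (hk : k ∈ s) :
    f k ≤ s.fold max 0 f := by
  rw [Finset.le_fold_max]; exact Or.inr ⟨k, hk, le_rfl⟩

lemma msgDist_nonneg {V : Type*} [Fintype V]
    (Adj : V → V → Prop) [DecidableRel Adj] (α β : V → V → ℝ) :
    0 ≤ msgDist Adj α β := by
  rw [msgDist, Finset.le_fold_max]; exact Or.inl le_rfl

lemma coord_le_msgDist {V : Type*} [Fintype V]
    (Adj : V → V → Prop) [DecidableRel Adj] (α β : V → V → ℝ) {i j : V}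
    (h : Adj i j) : |α i j - β i j| ≤ msgDist Adj α β := by
  have : (i, j) ∈ (Finset.univ ×ˢ Finset.univ).filter fun p : V × V => Adj p.1 p.2 := by
    simp [h]
  exact le_fold_max_of_mem (f := fun p : V × V => |α p.1 p.2 - β p.1 p.2|) this

end Aux

/-- One step nonexpansive. -/
theorem stmt0 {V : Type*} [Fintype V] [DecidableEq V]
    (Adj : V → V → Prop) [DecidableRel Adj] (w : V → V → ℝ)
    (hG : GoodGraph Adj w) (κ : ℝ) (hκ : κ ∈ Set.Ioo (0 : ℝ) 1)
    (α0 β0 : V → V → ℝ) (hα0 : ValidMsg Adj w α0) (hβ0 : ValidMsg Adj w β0) :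
    msgDist Adj (step Adj w κ α0) (step Adj w κ β0) ≤ msgDist Adj α0 β0 := by
  obtain ⟨hsym, hirr, hwsym, hwpos⟩ := hG
  obtain ⟨hκ0, hκ1⟩ := hκ
  set D := msgDist Adj α0 β0 with hDdef
  have hD : 0 ≤ D := msgDist_nonneg Adj α0 β0
  have hoffer : ∀ i k : V, Adj i k →
      |offer w α0 k i - offer w β0 k i| ≤ D := by
    intro i k hik
    have hki : Adj k i := hsym _ _ hik
    have h1 : |α0 k i - β0 k i| ≤ D := coord_le_msgDist Adj α0 β0 hki
    have h2 : |α0 i k - β0 i k| ≤ D := coord_le_msgDist Adj α0 β0 hik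
    calc |offer w α0 k i - offer w β0 k i|
        ≤ max |α0 k i - β0 k i| |α0 i k - β0 i k| :=
          offer_lip (w k i) (α0 k i) (α0 i k) (β0 k i) (β0 i k)
      _ ≤ D := max_le h1 h2
  have hbest : ∀ i j : V, |bestAlt Adj w α0 i j - bestAlt Adj w β0 i j| ≤ D := by
    intro i j
    apply fold_max_lip _ _ _ _ hD
    intro k hk
    simp only [Finset.mem_filter] at hk
    exact hoffer i k hk.2.1
  rw [msgDist]
  rw [Finset.fold_max_le]
  refine ⟨hD, ?_⟩
  rintro ⟨i, j⟩ hp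
  simp only [Finset.mem_filter] at hp
  have hij := hp.2
  have h1 := hbest i j
  have h2 : |α0 i j - β0 i j| ≤ D := coord_le_msgDist Adj α0 β0 hij
  have e : step Adj w κ α0 i j - step Adj w κ β0 i j =
      κ * (bestAlt Adj w α0 i j - bestAlt Adj w β0 i j) + (1 - κ) * (α0 i j - β0 i j) := by
    simp [step]; ring
  calc |step Adj w κ α0 i j - step Adj w κ β0 i j|
      ≤ κ * |bestAlt Adj w α0 i j - bestAlt Adj w β0 i j| + (1 - κ) * |α0 i j - β0 i j| := by
        rw [e]
        refine le_trans (abs_add_le _ _) ?_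
        rw [abs_mul, abs_mul, abs_of_pos hκ0, abs_of_pos (by linarith : (0:ℝ) < 1 - κ)]
    _ ≤ κ * D + (1 - κ) * D := by
        have h3 : (0:ℝ) ≤ 1 - κ := by linarith
        gcongr
    _ = D := by ring
end

section
/- For any edge (i,j) ∈ E and any two message vectors α and β satisfying |α_{i→j} − β_{i→j}| ≤ Δ and |α_{j→i} − β_{j→i}| ≤ Δ, the corresponding offers satisfy |m_{i→j}|_α − m_{i→j}|_β| ≤ Δ; that is, the offer on each directed edge is a 1-Lipschitz function (in sup-norm) of the pair of opposite messages on that edge. -/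
open Finset Filter Topology

/-- The offer on each directed edge is a 1-Lipschitz (in sup-norm) function of the
pair of opposite messages on that edge. -/
theorem stmt1 {V : Type*}
    (Adj : V → V → Prop) (w : V → V → ℝ) (hG : GoodGraph Adj w)
    (α β : V → V → ℝ)
    (hα : ∀ a b, Adj a b → 0 ≤ α a b) (hβ : ∀ a b, Adj a b → 0 ≤ β a b)
    (Δ : ℝ) (i j : V) (hij : Adj i j)
    (h1 : |α i j - β i j| ≤ Δ) (h2 : |α j i - β j i| ≤ Δ) :
    |offer w α i j - offer w β i j| ≤ Δ := by
  have hji := hG.1 i j hij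
  have hb : 0 ≤ α j i := hα j i hji
  have hb' : 0 ≤ β j i := hβ j i hji
  have key : ∀ x y : ℝ, 0 ≤ y →
      max (w i j - x) 0 - (1/2) * max (w i j - x - y) 0
        = (1/2) * max (w i j - x) 0 + (1/2) * min y (max (w i j - x) 0) := by
    intro x y hy
    rcases le_total (w i j - x) 0 with h | h
    · rw [max_eq_right h, max_eq_right (by linarith), min_eq_right (by linarith)]
      ring
    · rw [max_eq_left h]
      rcases le_total (w i j - x - y) 0 with h2 | h2
      · rw [max_eq_right h2, min_eq_right (by linarith)]; ring
      · rw [max_eq_left h2, min_eq_left (by linarith)]; ring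
  rw [offer, offer, key _ _ hb, key _ _ hb']
  have hA : |max (w i j - α i j) 0 - max (w i j - β i j) 0| ≤ Δ := by
    calc |max (w i j - α i j) 0 - max (w i j - β i j) 0|
        ≤ |(w i j - α i j) - (w i j - β i j)| := abs_max_sub_max_le_abs _ _ _
      _ ≤ Δ := by rw [show w i j - α i j - (w i j - β i j) = -(α i j - β i j) by ring,
            abs_neg]; exact h1
  have hM : |min (α j i) (max (w i j - α i j) 0)
      - min (β j i) (max (w i j - β i j) 0)| ≤ Δ := by
    calc _ ≤ max |α j i - β j i| |max (w i j - α i j) 0 - max (w i j - β i j) 0| :=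
          abs_min_sub_min_le_max _ _ _ _
      _ ≤ Δ := max_le h2 hA
  calc |(1/2) * max (w i j - α i j) 0 + (1/2) * min (α j i) (max (w i j - α i j) 0)
        - ((1/2) * max (w i j - β i j) 0 + (1/2) * min (β j i) (max (w i j - β i j) 0))|
      = |(1/2) * (max (w i j - α i j) 0 - max (w i j - β i j) 0)
          + (1/2) * (min (α j i) (max (w i j - α i j) 0)
            - min (β j i) (max (w i j - β i j) 0))| := by ring_nf
    _ ≤ (1/2) * |max (w i j - α i j) 0 - max (w i j - β i j) 0|
          + (1/2) * |min (α j i) (max (w i j - α i j) 0)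
            - min (β j i) (max (w i j - β i j) 0)| := by
        refine (abs_add_le _ _).trans ?_
        rw [abs_mul, abs_mul, abs_of_nonneg (by norm_num : (0:ℝ) ≤ 1/2)]
    _ ≤ (1/2) * Δ + (1/2) * Δ := by
        gcongr
    _ = Δ := by ring
end

section
/- Suppose the LP relaxation of maximum weight matching on G admits a unique optimum and this optimum is integral. Then for every fixed point (α, m, γ) of the natural dynamics, γ is the allocation of a Nash bargaining solution: there exists a matching M ⊆ E such that the pair (M, γ) is stable and balanced. -/
open Finset Filter Topology

/-- Feasibility for the LP relaxation of maximum weight matching: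
`x` symmetric, `x_{ij} ≥ 0` on edges, and `∑_{j∈∂i} x_{ij} ≤ 1` at every node. -/
def LPFeasible {V : Type*} [Fintype V]
    (Adj : V → V → Prop) [DecidableRel Adj] (x : V → V → ℝ) : Prop :=
  (∀ i j, x i j = x j i) ∧ (∀ i j, Adj i j → 0 ≤ x i j) ∧
  (∀ i, ∑ j ∈ Finset.univ.filter (fun j => Adj i j), x i j ≤ 1)

/-- The LP objective `∑_{(i,j)∈E} w_{ij} x_{ij}` (each undirected edge counted once,
i.e. half the sum over ordered pairs). -/
noncomputable def LPobj {V : Type*} [Fintype V]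
    (Adj : V → V → Prop) [DecidableRel Adj] (w x : V → V → ℝ) : ℝ :=
  (1 / 2) * ∑ p ∈ (Finset.univ ×ˢ Finset.univ).filter (fun p : V × V => Adj p.1 p.2),
    w p.1 p.2 * x p.1 p.2

/-- `M ⊆ E` is a matching (as a symmetric relation on nodes). -/
def IsMatching {V : Type*} (Adj M : V → V → Prop) : Prop :=
  (∀ i j, M i j → Adj i j) ∧ (∀ i j, M i j → M j i) ∧ (∀ i j k, M i j → M i k → j = k)

/-- `max_{k ∈ ∂i ∖ {j}} (w_{ik} − γ_k)₊` (max over the empty set is 0). -/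
noncomputable def bestAltGamma {V : Type*} [Fintype V] [DecidableEq V]
    (Adj : V → V → Prop) [DecidableRel Adj] (w : V → V → ℝ) (γ : V → ℝ) (i j : V) : ℝ :=
  (Finset.univ.filter fun k => Adj i k ∧ k ≠ j).fold max 0 fun k => max (w i k - γ k) 0

/-- A Nash bargaining solution `(M, γ)`: a matching with nonnegative profits,
`γ_i + γ_j = w_{ij}` on matched edges, `γ_i = 0` for unmatched nodes,
stability, and balance. -/
def IsNBSolution {V : Type*} [Fintype V] [DecidableEq V]
    (Adj : V → V → Prop) [DecidableRel Adj] (M : V → V → Prop)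
    (w : V → V → ℝ) (γ : V → ℝ) : Prop :=
  IsMatching Adj M ∧ (∀ i, 0 ≤ γ i) ∧ (∀ i j, M i j → γ i + γ j = w i j) ∧
  (∀ i, (∀ j, ¬M i j) → γ i = 0) ∧
  (∀ i j, Adj i j → ¬M i j → w i j ≤ γ i + γ j) ∧
  (∀ i j, M i j → γ i - bestAltGamma Adj w γ i j = γ j - bestAltGamma Adj w γ j i)

/-!
At a fixed point, every edge satisfies `γ i + γ j = max (w i j) (α i j + α j i)`, so the
earnings `γ` are dual feasible for the LP, and the edges of positive surplus `w i j - α i j - α j i`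
form a matching that is tight and balanced. It remains to see that a node `i` left unmatched
earns nothing. If `γ i > 0`, these earnings come from a tight edge to another unmatched node. From
there a walk alternates between tight edges outside the LP optimum `x` and edges of `x`, until it
reaches a node that `x` leaves free or one with zero earnings, or closes up. Adding a small
multiple of `+1` on the tight edges and `-1` on the edges of `x` along the walk keeps `x` feasible,
and by tightness and dual feasibility does not decrease the objective, contradicting uniqueness.
-/

open scoped Matrix

theorem Finset.exists_mem_eq_fold_max {ι : Type*} {s : Finset ι} {f : ι → ℝ} {b : ℝ}
    (h : b < s.fold max b f) : ∃ k ∈ s, f k = s.fold max b f := by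
  obtain hb | ⟨k, hk, hle⟩ := (le_fold_max (s.fold max b f)).1 le_rfl
  · exact absurd hb h.not_ge
  · exact ⟨k, hk, le_antisymm (((fold_max_le _).1 le_rfl).2 k hk) hle⟩

theorem Finite.exists_iterate_eq_self {α : Type*} [Finite α] (f : α → α) (x : α) :
    ∃ y n, 0 < n ∧ f^[n] y = y := by
  obtain ⟨m, n, hne, heq⟩ := Finite.exists_ne_map_eq_of_infinite fun n => f^[n] x
  rcases lt_or_gt_of_ne hne with hmn | hnm
  · refine ⟨f^[m] x, n - m, by omega, ?_⟩
    rw [← Function.iterate_add_apply, Nat.sub_add_cancel hmn.le]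
    exact heq.symm
  · refine ⟨f^[n] x, m - n, by omega, ?_⟩
    rw [← Function.iterate_add_apply, Nat.sub_add_cancel hnm.le]
    exact heq

section

variable {V : Type*} {Adj : V → V → Prop} {w α x : V → V → ℝ} {i j k a b c : V}

namespace GoodGraph

variable (hG : GoodGraph Adj w)
include hG

theorem adj_symm (h : Adj i j) : Adj j i := hG.1 i j h

theorem ne_of_adj (h : Adj i j) : i ≠ j := fun hij => hG.2.1 i (hij ▸ h)

theorem w_symm (i j : V) : w i j = w j i := hG.2.2.1 i j

end GoodGraph

structure IsAlternating (w : V → V → ℝ) (γ : V → ℝ) (x g : V → V → ℝ) : Prop where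
  symm : ∀ i j, g i j = g j i
  tight_of_pos : ∀ i j, 0 < g i j → w i j = γ i + γ j
  eq_one_of_neg : ∀ i j, g i j < 0 → x i j = 1

theorem IsAlternating.nonneg {γ : V → ℝ} {g : V → V → ℝ} (hg : IsAlternating w γ x g)
    (h : x i j ≠ 1) : 0 ≤ g i j :=
  not_lt.1 fun hneg => h (hg.eq_one_of_neg i j hneg)

section

variable [DecidableEq V]

def edgeInd (a b : V) (i j : V) : ℝ := if s(i, j) = s(a, b) then 1 else 0

theorem edgeInd_symm (a b i j : V) : edgeInd a b i j = edgeInd a b j i := by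
  simp [edgeInd, Sym2.eq_swap]

theorem edgeInd_nonneg (a b i j : V) : 0 ≤ edgeInd a b i j := by
  unfold edgeInd; split_ifs <;> norm_num

theorem edgeInd_self (a b : V) : edgeInd a b a b = 1 := by simp [edgeInd]

theorem IsAlternating.one_le_edgeInd_add {γ : V → ℝ} {g : V → V → ℝ}
    (hg : IsAlternating w γ x g) (h : x a b ≠ 1) : 1 ≤ (edgeInd a b + g) a b := by
  simpa [edgeInd_self] using hg.nonneg h

end

variable [Fintype V] [DecidableRel Adj]

variable (Adj) in
def rowSums : (V → V → ℝ) →ₗ[ℝ] V → ℝ where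
  toFun g v := ∑ j ∈ univ.filter (fun j => Adj v j), g v j
  map_add' g h := by ext v; simp [sum_add_distrib]
  map_smul' c g := by ext v; simp [mul_sum]

theorem rowSums_apply (g : V → V → ℝ) (v : V) :
    rowSums Adj g v = ∑ j ∈ univ.filter (fun j => Adj v j), g v j := rfl

theorem LPobj_eq_sum_neighbors (w g : V → V → ℝ) :
    LPobj Adj w g = 1 / 2 * ∑ i, ∑ j ∈ univ.filter (fun j => Adj i j), w i j * g i j := by
  rw [LPobj, sum_filter, sum_product]
  simp [sum_filter]

theorem LPobj_add_smul (x g : V → V → ℝ) (ε : ℝ) :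
    LPobj Adj w (x + ε • g) = LPobj Adj w x + ε * LPobj Adj w g := by
  simp only [LPobj, mul_sum, ← sum_add_distrib]
  refine sum_congr rfl fun p _ => ?_
  simp only [Pi.add_apply, Pi.smul_apply, smul_eq_mul]
  ring

theorem sum_sum_adj_comm (hAdj : ∀ i j, Adj i j → Adj j i) (F : V → V → ℝ) :
    ∑ i, ∑ j ∈ univ.filter (fun j => Adj i j), F i j =
      ∑ i, ∑ j ∈ univ.filter (fun j => Adj i j), F j i := by
  simp only [sum_filter]
  rw [sum_comm]
  refine sum_congr rfl fun i _ => sum_congr rfl fun j _ => ?_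
  rw [if_congr ⟨hAdj j i, hAdj i j⟩ rfl rfl]

theorem dotProduct_rowSums_le_LPobj (hAdj : ∀ i j, Adj i j → Adj j i) {y : V → ℝ}
    {g : V → V → ℝ} (hg : ∀ i j, g i j = g j i)
    (hpos : ∀ i j, Adj i j → 0 < g i j → y i + y j ≤ w i j)
    (hneg : ∀ i j, Adj i j → g i j < 0 → w i j ≤ y i + y j) :
    y ⬝ᵥ rowSums Adj g ≤ LPobj Adj w g := by
  have hterm : ∀ i, ∀ j ∈ univ.filter (fun j => Adj i j),
      (y i + y j) * g i j ≤ w i j * g i j := by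
    intro i j hj
    have hij := (mem_filter.1 hj).2
    rcases lt_trichotomy (g i j) 0 with h | h | h
    · exact mul_le_mul_of_nonpos_right (hneg i j hij h) h.le
    · simp [h]
    · exact mul_le_mul_of_nonneg_right (hpos i j hij h) h.le
  have hrow : y ⬝ᵥ rowSums Adj g = ∑ i, ∑ j ∈ univ.filter (fun j => Adj i j), y i * g i j := by
    simp [dotProduct, rowSums_apply, mul_sum]
  have hswap : ∑ i, ∑ j ∈ univ.filter (fun j => Adj i j), y j * g i j =
      ∑ i, ∑ j ∈ univ.filter (fun j => Adj i j), y i * g i j := by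
    rw [sum_sum_adj_comm hAdj]
    simp only [hg]
  calc y ⬝ᵥ rowSums Adj g
      = 1 / 2 * ∑ i, ∑ j ∈ univ.filter (fun j => Adj i j), (y i + y j) * g i j := by
        simp only [add_mul, sum_add_distrib, hswap, hrow]
        ring
    _ ≤ LPobj Adj w g := by
        rw [LPobj_eq_sum_neighbors]
        exact mul_le_mul_of_nonneg_left
          (sum_le_sum fun i _ => sum_le_sum fun j hj => hterm i j hj) (by norm_num)

theorem eventually_add_mul_le {a b c : ℝ} (h : a < b ∨ a ≤ b ∧ c ≤ 0) :
    ∀ᶠ ε in 𝓝[>] (0 : ℝ), a + ε * c ≤ b := by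
  rcases h with h | ⟨h, hc⟩
  · have hlim : Tendsto (fun ε : ℝ => a + ε * c) (𝓝[>] 0) (𝓝 a) := by
      have hcont : Continuous fun ε : ℝ => a + ε * c := by fun_prop
      simpa using (hcont.tendsto 0).mono_left nhdsWithin_le_nhds
    exact (hlim.eventually (gt_mem_nhds h)).mono fun _ => le_of_lt
  · filter_upwards [self_mem_nhdsWithin] with ε (hε : 0 < ε)
    nlinarith

theorem LPFeasible.eventually_add_smul {g : V → V → ℝ} (hx : LPFeasible Adj x)
    (hg : ∀ i j, g i j = g j i) (hneg : ∀ i j, Adj i j → g i j < 0 → 0 < x i j)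
    (hrow : ∀ v, rowSums Adj x v = 1 → rowSums Adj g v ≤ 0) :
    ∀ᶠ ε in 𝓝[>] (0 : ℝ), LPFeasible Adj (x + ε • g) := by
  have hedge : ∀ᶠ ε in 𝓝[>] (0 : ℝ), ∀ i j, Adj i j → -x i j + ε * -g i j ≤ 0 := by
    refine eventually_all.2 fun i => eventually_all.2 fun j => ?_
    by_cases hij : Adj i j
    · refine (eventually_add_mul_le ?_).mono fun ε hε _ => hε
      rcases lt_or_ge (g i j) 0 with h | h
      · exact Or.inl (by linarith [hneg i j hij h])
      · exact Or.inr ⟨by linarith [hx.2.1 i j hij], by linarith⟩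
    · exact Eventually.of_forall fun ε h => absurd h hij
  have hrows : ∀ᶠ ε in 𝓝[>] (0 : ℝ), ∀ v, rowSums Adj x v + ε * rowSums Adj g v ≤ 1 := by
    refine eventually_all.2 fun v => eventually_add_mul_le ?_
    by_cases h1 : rowSums Adj x v = 1
    · exact Or.inr ⟨h1.le, hrow v h1⟩
    · exact Or.inl (lt_of_le_of_ne (hx.2.2 v) h1)
  filter_upwards [hedge, hrows] with ε he hr
  refine ⟨fun i j => by simp [hx.1 i j, hg i j], fun i j h => ?_, fun v => ?_⟩
  · simp only [Pi.add_apply, Pi.smul_apply, smul_eq_mul]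
    linarith [he i j h]
  · change rowSums Adj (x + ε • g) v ≤ 1
    simpa using hr v

def IsUniqueOpt (Adj : V → V → Prop) [DecidableRel Adj] (w x : V → V → ℝ) : Prop :=
  LPFeasible Adj x ∧ ∀ x', LPFeasible Adj x' → (∃ i j, Adj i j ∧ x' i j ≠ x i j) →
    LPobj Adj w x' < LPobj Adj w x

theorem IsUniqueOpt.false_of_perturbation {g : V → V → ℝ} (hopt : IsUniqueOpt Adj w x)
    (hg : ∀ i j, g i j = g j i) (hneg : ∀ i j, Adj i j → g i j < 0 → 0 < x i j)
    (hrow : ∀ v, rowSums Adj x v = 1 → rowSums Adj g v ≤ 0) (hobj : 0 ≤ LPobj Adj w g)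
    (hne : ∃ i j, Adj i j ∧ g i j ≠ 0) : False := by
  obtain ⟨ε, hfeas, hε⟩ :=
    ((hopt.1.eventually_add_smul hg hneg hrow).and self_mem_nhdsWithin).exists
  obtain ⟨i, j, hij, hgij⟩ := hne
  have hlt := hopt.2 _ hfeas ⟨i, j, hij, by simp [hgij, (show (0 : ℝ) < ε from hε).ne']⟩
  rw [LPobj_add_smul] at hlt
  nlinarith [show (0 : ℝ) < ε from hε]

theorem LPFeasible.rowSums_eq_one (hx : LPFeasible Adj x) (hab : Adj a b) (h1 : x a b = 1) :
    rowSums Adj x a = 1 :=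
  le_antisymm (hx.2.2 a)
    (h1 ▸ single_le_sum (fun j hj => hx.2.1 a j (mem_filter.1 hj).2) (by simp [hab]))

theorem LPFeasible.eq_of_eq_one (hx : LPFeasible Adj x) (hab : Adj a b) (h1 : x a b = 1)
    (hac : Adj a c) (h1' : x a c = 1) : b = c := by
  classical
  by_contra hbc
  have hsub : ({b, c} : Finset V) ⊆ univ.filter (fun j => Adj a j) := by
    intro j hj
    rcases mem_insert.1 hj with rfl | hj
    · simpa using hab
    · simpa [mem_singleton.1 hj] using hac
  have := sum_le_sum_of_subset_of_nonneg hsub fun j hj _ => hx.2.1 a j (mem_filter.1 hj).2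
  rw [sum_pair hbc, h1, h1'] at this
  linarith [hx.2.2 a]

theorem exists_eq_one_of_rowSums_eq_one (hint : ∀ i j, Adj i j → x i j = 0 ∨ x i j = 1)
    (h : rowSums Adj x a = 1) : ∃ b, Adj a b ∧ x a b = 1 := by
  by_contra! hne
  have : rowSums Adj x a = 0 :=
    sum_eq_zero fun j hj => (hint a j (mem_filter.1 hj).2).resolve_right (hne j (mem_filter.1 hj).2)
  linarith

/-- For dual feasible `γ`, the value `γ ⬝ᵥ rowSums Adj g` bounds the objective of `g` from below
(`dotProduct_rowSums_le_LPobj`); the slack `s` telescopes along an alternating walk. -/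
structure IsAugmenting (Adj : V → V → Prop) [DecidableRel Adj] (w : V → V → ℝ) (γ : V → ℝ)
    (x : V → V → ℝ) (s : V → ℝ) (g : V → V → ℝ) : Prop extends IsAlternating w γ x g where
  rowSums_le : ∀ v, rowSums Adj x v = 1 → rowSums Adj g v ≤ s v
  dotProduct_le : γ ⬝ᵥ s ≤ γ ⬝ᵥ rowSums Adj g

namespace IsAugmenting

variable {γ s t : V → ℝ} {g h : V → V → ℝ}

theorem zero : IsAugmenting Adj w γ x 0 0 where
  symm _ _ := rfl
  tight_of_pos _ _ h := absurd h (lt_irrefl 0)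
  eq_one_of_neg _ _ h := absurd h (lt_irrefl 0)
  rowSums_le _ _ := by simp
  dotProduct_le := by simp

theorem add (hg : IsAugmenting Adj w γ x s g) (hh : IsAugmenting Adj w γ x t h) :
    IsAugmenting Adj w γ x (s + t) (g + h) where
  symm i j := by simp [hg.symm i j, hh.symm i j]
  tight_of_pos i j hpos := by
    rcases lt_or_ge 0 (g i j) with hgij | hgij
    · exact hg.tight_of_pos i j hgij
    · exact hh.tight_of_pos i j (by simp only [Pi.add_apply] at hpos; linarith)
  eq_one_of_neg i j hneg := by
    rcases lt_or_ge (g i j) 0 with hgij | hgij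
    · exact hg.eq_one_of_neg i j hgij
    · exact hh.eq_one_of_neg i j (by simp only [Pi.add_apply] at hneg; linarith)
  rowSums_le v hv := by
    simpa using add_le_add (hg.rowSums_le v hv) (hh.rowSums_le v hv)
  dotProduct_le := by
    simpa [dotProduct_add] using add_le_add hg.dotProduct_le hh.dotProduct_le

theorem sum {ι : Type*} {T : Finset ι} {S : ι → V → ℝ} {G : ι → V → V → ℝ}
    (hG : ∀ τ ∈ T, IsAugmenting Adj w γ x (S τ) (G τ)) :
    IsAugmenting Adj w γ x (∑ τ ∈ T, S τ) (∑ τ ∈ T, G τ) := by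
  classical
  induction T using Finset.induction_on with
  | empty => simpa using zero
  | insert τ T hτ ih =>
    rw [sum_insert hτ, sum_insert hτ]
    exact (hG τ (mem_insert_self τ T)).add (ih fun τ' h' => hG τ' (mem_insert_of_mem h'))

theorem mono (hg : IsAugmenting Adj w γ x s g) (hst : ∀ v, rowSums Adj x v = 1 → s v ≤ t v)
    (hγ : γ ⬝ᵥ t ≤ γ ⬝ᵥ s) : IsAugmenting Adj w γ x t g :=
  { hg.toIsAlternating with
    rowSums_le := fun v hv => (hg.rowSums_le v hv).trans (hst v hv)
    dotProduct_le := hγ.trans hg.dotProduct_le }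

theorem false_of_isUniqueOpt (hg : IsAugmenting Adj w γ x 0 g) (hopt : IsUniqueOpt Adj w x)
    (hAdj : ∀ i j, Adj i j → Adj j i) (hdual : ∀ i j, Adj i j → w i j ≤ γ i + γ j)
    (hne : ∃ i j, Adj i j ∧ g i j ≠ 0) : False :=
  hopt.false_of_perturbation hg.symm
    (fun i j _ hneg => by rw [hg.eq_one_of_neg i j hneg]; exact one_pos)
    (fun v hv => by simpa using hg.rowSums_le v hv)
    (by simpa using hg.dotProduct_le.trans (dotProduct_rowSums_le_LPobj hAdj hg.symm
      (fun i j _ hpos => (hg.tight_of_pos i j hpos).ge) fun i j hij _ => hdual i j hij))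
    hne

end IsAugmenting

theorem earn_nonneg (i : V) : 0 ≤ earn Adj w α i :=
  (le_fold_max _).2 (Or.inl le_rfl)

variable [DecidableEq V]

theorem IsFixedPoint.bestAlt_eq {κ : ℝ} (hfp : IsFixedPoint Adj w κ α) (hκ : κ ≠ 0)
    (h : Adj i j) : bestAlt Adj w α i j = α i j := by
  have hstep := hfp i j h
  simp only [step] at hstep
  have : κ * (bestAlt Adj w α i j - α i j) = 0 := by linarith
  exact sub_eq_zero.1 ((mul_eq_zero.1 this).resolve_left hκ)

theorem earn_eq_max_bestAlt (h : Adj i j) :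
    earn Adj w α i = max (offer w α j i) (bestAlt Adj w α i j) := by
  have hN : (univ.filter fun k => Adj i k) = insert j (univ.filter fun k => Adj i k ∧ k ≠ j) := by
    ext k; by_cases hk : k = j <;> simp [hk, h]
  rw [earn, hN, fold_insert (by simp), bestAlt]

theorem offer_le_bestAlt (hk : Adj i k) (hkj : k ≠ j) : offer w α k i ≤ bestAlt Adj w α i j :=
  (le_fold_max _).2 (Or.inr ⟨k, by simp [hk, hkj], le_rfl⟩)

def fixedMatching (Adj : V → V → Prop) (w α : V → V → ℝ) (i j : V) : Prop :=
  Adj i j ∧ α i j + α j i < w i j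

/-- The fixed points of the natural dynamics do not depend on the damping `κ ≠ 0`. -/
structure IsFixedMsg (Adj : V → V → Prop) [DecidableRel Adj] (w α : V → V → ℝ) : Prop where
  graph : GoodGraph Adj w
  bestAlt_eq : ∀ i j, Adj i j → bestAlt Adj w α i j = α i j

namespace IsFixedMsg

variable (hα : IsFixedMsg Adj w α)
include hα

theorem alpha_nonneg (h : Adj i j) : 0 ≤ α i j := by
  rw [← hα.bestAlt_eq i j h]
  exact (le_fold_max _).2 (Or.inl le_rfl)

theorem earn_eq (h : Adj i j) :
    earn Adj w α i = α i j + max (w i j - α i j - α j i) 0 / 2 := by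
  rw [earn_eq_max_bestAlt h, hα.bestAlt_eq i j h, offer, hα.graph.w_symm j i]
  have := hα.alpha_nonneg h
  simp only [max_def]
  split_ifs <;> linarith

theorem fixedMatching_symm (h : fixedMatching Adj w α i j) : fixedMatching Adj w α j i :=
  ⟨hα.graph.adj_symm h.1, by rw [hα.graph.w_symm]; linarith [h.2]⟩

theorem earn_add_earn_of_fixedMatching (h : fixedMatching Adj w α i j) :
    earn Adj w α i + earn Adj w α j = w i j := by
  rw [hα.earn_eq h.1, hα.earn_eq (hα.graph.adj_symm h.1), hα.graph.w_symm j i,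
    max_eq_left (by linarith [h.2]), max_eq_left (by linarith [h.2])]
  ring

theorem earn_eq_of_not_fixedMatching (h : Adj i j) (hM : ¬fixedMatching Adj w α i j) :
    earn Adj w α i = α i j := by
  rw [hα.earn_eq h, max_eq_right (by linarith [not_lt.1 fun hs => hM ⟨h, hs⟩])]
  ring

theorem le_earn_add_earn (h : Adj i j) : w i j ≤ earn Adj w α i + earn Adj w α j := by
  by_cases hM : fixedMatching Adj w α i j
  · exact (hα.earn_add_earn_of_fixedMatching hM).ge
  · have hM' : ¬fixedMatching Adj w α j i := fun h' => hM (hα.fixedMatching_symm h')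
    rw [hα.earn_eq_of_not_fixedMatching h hM,
      hα.earn_eq_of_not_fixedMatching (hα.graph.adj_symm h) hM']
    exact not_lt.1 fun hs => hM ⟨h, hs⟩

theorem offer_eq_earn_of_fixedMatching (h : fixedMatching Adj w α i k) :
    offer w α k i = earn Adj w α i := by
  rw [hα.earn_eq h.1, offer, hα.graph.w_symm k i]
  have := h.2
  have := hα.alpha_nonneg h.1
  simp only [max_def]
  split_ifs <;> linarith

theorem offer_lt_earn (h : fixedMatching Adj w α i j) (hk : Adj i k) (hkj : k ≠ j) :
    offer w α k i < earn Adj w α i := by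
  calc offer w α k i ≤ bestAlt Adj w α i j := offer_le_bestAlt hk hkj
    _ = α i j := hα.bestAlt_eq i j h.1
    _ < earn Adj w α i := by rw [hα.earn_eq h.1, max_eq_left (by linarith [h.2])]; linarith [h.2]

theorem fixedMatching_unique (hj : fixedMatching Adj w α i j) (hk : fixedMatching Adj w α i k) :
    j = k := by
  by_contra hjk
  have := hα.offer_lt_earn hj hk.1 (Ne.symm hjk)
  rw [hα.offer_eq_earn_of_fixedMatching hk] at this
  exact this.false

theorem offer_eq_of_not_fixedMatching (hk : Adj i k) (hM : ¬fixedMatching Adj w α i k) :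
    offer w α k i = max (w i k - earn Adj w α k) 0 := by
  have hM' : ¬fixedMatching Adj w α k i := fun h => hM (hα.fixedMatching_symm h)
  have hs : w k i - α k i - α i k ≤ 0 := by
    rw [hα.graph.w_symm]; linarith [not_lt.1 fun hs => hM ⟨hk, hs⟩]
  rw [offer, max_eq_right hs, hα.earn_eq_of_not_fixedMatching (hα.graph.adj_symm hk) hM',
    hα.graph.w_symm k i]
  ring

theorem bestAltGamma_eq (h : fixedMatching Adj w α i j) :
    bestAltGamma Adj w (earn Adj w α) i j = α i j := by
  rw [bestAltGamma, ← hα.bestAlt_eq i j h.1, bestAlt]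
  refine fold_congr fun k hk => ?_
  obtain ⟨hik, hkj⟩ := (mem_filter.1 hk).2
  exact (hα.offer_eq_of_not_fixedMatching hik
    fun h' => hkj (hα.fixedMatching_unique h h').symm).symm

theorem isNBSolution (hzero : ∀ i, (∀ j, ¬fixedMatching Adj w α i j) → earn Adj w α i = 0) :
    IsNBSolution Adj (fixedMatching Adj w α) w (earn Adj w α) := by
  refine ⟨⟨fun i j h => h.1, fun i j => hα.fixedMatching_symm,
    fun i j k => hα.fixedMatching_unique⟩, earn_nonneg,
    fun i j => hα.earn_add_earn_of_fixedMatching, hzero, fun i j h _ => hα.le_earn_add_earn h,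
    fun i j h => ?_⟩
  rw [hα.bestAltGamma_eq h, hα.bestAltGamma_eq (hα.fixedMatching_symm h), hα.earn_eq h.1,
    hα.earn_eq (hα.graph.adj_symm h.1), hα.graph.w_symm j i]
  ring_nf

theorem exists_tight_unmatched (hc : ∀ l, ¬fixedMatching Adj w α c l)
    (hpos : 0 < earn Adj w α c) (b : V) :
    ∃ k, k ≠ b ∧ Adj c k ∧ w c k = earn Adj w α c + earn Adj w α k ∧
      ∀ l, ¬fixedMatching Adj w α k l := by
  have hbest : bestAlt Adj w α c b = earn Adj w α c := by
    by_cases hcb : Adj c b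
    · rw [hα.bestAlt_eq c b hcb, hα.earn_eq_of_not_fixedMatching hcb (hc b)]
    · rw [bestAlt, earn]
      congr 1
      ext k
      simp only [mem_filter, mem_univ, true_and]
      exact ⟨And.left, fun hk => ⟨hk, by rintro rfl; exact hcb hk⟩⟩
  obtain ⟨k, hk, hoff⟩ := exists_mem_eq_fold_max (show 0 < bestAlt Adj w α c b from hbest ▸ hpos)
  obtain ⟨hck, hkb⟩ := (mem_filter.1 hk).2
  change offer w α k c = bestAlt Adj w α c b at hoff
  rw [hbest, hα.offer_eq_of_not_fixedMatching hck (hc k)] at hoff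
  have htight : w c k = earn Adj w α c + earn Adj w α k := by
    rw [max_def] at hoff; split_ifs at hoff <;> linarith
  refine ⟨k, hkb, hck, htight, fun l hl => ?_⟩
  have hlc : c ≠ l := fun hcl => hc k (hα.fixedMatching_symm (hcl ▸ hl))
  have hlt := hα.offer_lt_earn hl (hα.graph.adj_symm hck) hlc
  rw [hα.offer_eq_of_not_fixedMatching (hα.graph.adj_symm hck)
    (fun h => hc k (hα.fixedMatching_symm h)), hα.graph.w_symm k c,
    max_eq_left (by linarith [earn_nonneg (Adj := Adj) (w := w) (α := α) k])] at hlt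
  linarith

end IsFixedMsg

theorem rowSums_edgeInd (hab : Adj a b) (hba : Adj b a) (hne : a ≠ b) :
    rowSums Adj (edgeInd a b) = Pi.single a 1 + Pi.single b 1 := by
  ext v
  by_cases hva : v = a
  · subst hva
    simp [rowSums_apply, edgeInd, hne, hab]
  · by_cases hvb : v = b
    · subst hvb
      simp [rowSums_apply, edgeInd, hva, hba]
    · simp [rowSums_apply, edgeInd, hva, hvb]

variable {γ : V → ℝ}

theorem isAugmenting_zero_single (h : γ a ≤ 0) : IsAugmenting Adj w γ x (Pi.single a 1) 0 :=
  IsAugmenting.zero.mono (fun v _ => by by_cases hv : v = a <;> simp [hv])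
    (by simpa [dotProduct_single])

theorem isAugmenting_edgeInd (hab : Adj a b) (hba : Adj b a) (hne : a ≠ b) (hw : w b a = w a b)
    (ht : w a b = γ a + γ b) :
    IsAugmenting Adj w γ x (Pi.single a 1 + Pi.single b 1) (edgeInd a b) where
  symm := edgeInd_symm a b
  tight_of_pos i j hpos := by
    have hij : s(i, j) = s(a, b) := by by_contra h; simp [edgeInd, h] at hpos
    rcases Sym2.eq_iff.1 hij with ⟨rfl, rfl⟩ | ⟨rfl, rfl⟩
    · exact ht
    · rw [hw, ht, add_comm]
  eq_one_of_neg i j hneg := absurd hneg (edgeInd_nonneg a b i j).not_gt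
  rowSums_le v _ := by rw [rowSums_edgeInd hab hba hne]
  dotProduct_le := by rw [rowSums_edgeInd hab hba hne]

theorem isAugmenting_neg_edgeInd (hab : Adj a b) (hba : Adj b a) (hne : a ≠ b) (hx : x b a = x a b)
    (h1 : x a b = 1) :
    IsAugmenting Adj w γ x (-(Pi.single a 1 + Pi.single b 1)) (-edgeInd a b) where
  symm i j := by simp [edgeInd_symm a b i j]
  tight_of_pos i j hpos := absurd hpos (by simpa using edgeInd_nonneg a b i j)
  eq_one_of_neg i j hneg := by
    have hij : s(i, j) = s(a, b) := by by_contra h; simp [edgeInd, h] at hneg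
    rcases Sym2.eq_iff.1 hij with ⟨rfl, rfl⟩ | ⟨rfl, rfl⟩
    · exact h1
    · rw [hx, h1]
  rowSums_le v _ := by rw [map_neg, rowSums_edgeInd hab hba hne]
  dotProduct_le := by rw [map_neg, rowSums_edgeInd hab hba hne]

/-- The last clause lets the walk continue from the LP partner of `b` without stepping back to
`b` (`IsWalkEdge.not_fixedMatching_partner`). -/
def IsWalkEdge (Adj : V → V → Prop) [DecidableRel Adj] (w α x : V → V → ℝ) (a b : V) : Prop :=
  Adj a b ∧ w a b = earn Adj w α a + earn Adj w α b ∧ x a b ≠ 1 ∧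
    (fixedMatching Adj w α a b ∨ ∀ l, ¬fixedMatching Adj w α b l)

theorem IsWalkEdge.isAugmenting_of_unsaturated (hα : IsFixedMsg Adj w α)
    (hab : IsWalkEdge Adj w α x a b) (hb : rowSums Adj x b ≠ 1) :
    IsAugmenting Adj w (earn Adj w α) x (Pi.single a 1) (edgeInd a b) := by
  have hG := hα.graph
  refine (isAugmenting_edgeInd hab.1 (hG.adj_symm hab.1) (hG.ne_of_adj hab.1)
    (hG.w_symm b a) hab.2.1).mono (fun v hv => ?_) ?_
  · have hvb : v ≠ b := by rintro rfl; exact hb hv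
    simp [Pi.single_apply, hvb]
  · simp [dotProduct_add, dotProduct_single, earn_nonneg]

section Walk

variable (hα : IsFixedMsg Adj w α) (hx : LPFeasible Adj x)
include hα hx

theorem exists_isWalkEdge_of_partner (hbc : Adj b c) (h1 : x b c = 1)
    (hpos : 0 < earn Adj w α c) (hM : ¬fixedMatching Adj w α c b) :
    ∃ d, IsWalkEdge Adj w α x c d := by
  have hcb := hα.graph.adj_symm hbc
  have h1' : x c b = 1 := by rw [hx.1]; exact h1
  by_cases hm : ∃ d, fixedMatching Adj w α c d
  · obtain ⟨d, hd⟩ := hm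
    refine ⟨d, hd.1, (hα.earn_add_earn_of_fixedMatching hd).symm, fun h => ?_, Or.inl hd⟩
    exact hM (hx.eq_of_eq_one hd.1 h hcb h1' ▸ hd)
  · simp only [not_exists] at hm
    obtain ⟨d, hdb, hcd, ht, hd⟩ := hα.exists_tight_unmatched hm hpos b
    exact ⟨d, hcd, ht, fun h => hdb (hx.eq_of_eq_one hcd h hcb h1'), Or.inr hd⟩

namespace IsWalkEdge

variable (hab : IsWalkEdge Adj w α x a b)
include hab

theorem not_fixedMatching_partner (h1 : x b c = 1) : ¬fixedMatching Adj w α c b := by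
  have hca : c ≠ a := by
    rintro rfl
    exact hab.2.2.1 (by rw [hx.1]; exact h1)
  intro hcb
  rcases hab.2.2.2 with hM | hM
  · exact hca (hα.fixedMatching_unique (hα.fixedMatching_symm hcb) (hα.fixedMatching_symm hM))
  · exact hM c (hα.fixedMatching_symm hcb)

theorem isAugmenting_step (hbc : Adj b c) (h1 : x b c = 1) :
    IsAugmenting Adj w (earn Adj w α) x (Pi.single a 1 - Pi.single c 1)
      (edgeInd a b + -edgeInd b c) := by
  have hG := hα.graph
  have h := (isAugmenting_edgeInd hab.1 (hG.adj_symm hab.1) (hG.ne_of_adj hab.1)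
    (hG.w_symm b a) hab.2.1).add
    (isAugmenting_neg_edgeInd hbc (hG.adj_symm hbc) (hG.ne_of_adj hbc) (hx.1 c b) h1)
  convert h using 1
  abel

theorem extend {g : V → V → ℝ} (hbc : Adj b c) (h1 : x b c = 1)
    (hg : IsAugmenting Adj w (earn Adj w α) x (Pi.single c 1) g) :
    IsAugmenting Adj w (earn Adj w α) x (Pi.single a 1) (edgeInd a b + -edgeInd b c + g) ∧
      1 ≤ (edgeInd a b + -edgeInd b c + g) a b := by
  have hG := hα.graph
  refine ⟨by simpa using (hab.isAugmenting_step hα hx hbc h1).add hg, ?_⟩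
  rw [add_assoc]
  exact ((isAugmenting_neg_edgeInd hbc (hG.adj_symm hbc) (hG.ne_of_adj hbc) (hx.1 c b)
    h1).add hg).one_le_edgeInd_add hab.2.2.1

end IsWalkEdge

end Walk

section UniqueOpt

variable (hα : IsFixedMsg Adj w α) (hopt : IsUniqueOpt Adj w x)
include hα hopt

theorem false_of_closed_walk {A B : ℕ → V} {q : ℕ} (hq : 0 < q) (hAq : A q = A 0)
    (hwalk : ∀ t, IsWalkEdge Adj w α x (A t) (B t))
    (hnext : ∀ t, Adj (B t) (A (t + 1)) ∧ x (B t) (A (t + 1)) = 1) : False := by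
  have hG := hα.graph
  have hstep t := (hwalk t).isAugmenting_step hα hopt.1 (hnext t).1 (hnext t).2
  have hg := IsAugmenting.sum (T := range q) fun t _ => hstep t
  have htel : ∑ t ∈ range q, (Pi.single (A t) (1 : ℝ) - Pi.single (A (t + 1)) 1 : V → ℝ) = 0 := by
    rw [sum_range_sub' (fun t => (Pi.single (A t) (1 : ℝ) : V → ℝ)), hAq, sub_self]
  rw [htel] at hg
  refine hg.false_of_isUniqueOpt hopt (fun _ _ => hG.adj_symm)
    (fun i j h => hα.le_earn_add_earn h) ⟨A 0, B 0, (hwalk 0).1, ne_of_gt ?_⟩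
  calc (0 : ℝ) < 1 := one_pos
    _ ≤ (edgeInd (A 0) (B 0) + -edgeInd (B 0) (A (0 + 1))) (A 0) (B 0) :=
      (isAugmenting_neg_edgeInd (w := w) (γ := earn Adj w α) (hnext 0).1
        (hG.adj_symm (hnext 0).1) (hG.ne_of_adj (hnext 0).1) (hopt.1.1 _ _)
        (hnext 0).2).one_le_edgeInd_add (hwalk 0).2.2.1
    _ ≤ ∑ t ∈ range q, (edgeInd (A t) (B t) + -edgeInd (B t) (A (t + 1))) (A 0) (B 0) :=
      single_le_sum (fun t _ => (hstep t).nonneg (hwalk 0).2.2.1) (mem_range.2 hq)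
    _ = _ := by simp only [Finset.sum_apply]

variable (hint : ∀ i j, Adj i j → x i j = 0 ∨ x i j = 1)
include hint

/-- Follow the walk from `a b` as long as no perturbation is found: the LP partner `c` of `b`
has positive earnings, and the walk goes on from `c`. In a finite graph it closes up. -/
theorem exists_isAugmenting_of_isWalkEdge (hab : IsWalkEdge Adj w α x a b) :
    ∃ g, IsAugmenting Adj w (earn Adj w α) x (Pi.single a 1) g ∧ 1 ≤ g a b := by
  by_contra! hbad
  let Stuck := {p : V × V // IsWalkEdge Adj w α x p.1 p.2 ∧
    ∀ g, IsAugmenting Adj w (earn Adj w α) x (Pi.single p.1 1) g → g p.1 p.2 < 1}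
  have hnext : ∀ p : Stuck, ∃ p' : Stuck, Adj p.1.2 p'.1.1 ∧ x p.1.2 p'.1.1 = 1 := by
    rintro ⟨⟨a, b⟩, hab, hbad⟩
    have hsat : rowSums Adj x b = 1 := by
      by_contra hb
      exact (hbad _ (hab.isAugmenting_of_unsaturated hα hb)).not_ge (edgeInd_self a b).ge
    obtain ⟨c, hbc, h1⟩ := exists_eq_one_of_rowSums_eq_one hint hsat
    have hpos : 0 < earn Adj w α c := by
      by_contra! hc
      obtain ⟨hg, hg1⟩ := hab.extend hα hopt.1 hbc h1 (isAugmenting_zero_single hc)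
      exact (hbad _ hg).not_ge hg1
    obtain ⟨d, hcd⟩ := exists_isWalkEdge_of_partner hα hopt.1 hbc h1 hpos
      (hab.not_fixedMatching_partner hα hopt.1 h1)
    refine ⟨⟨(c, d), hcd, fun g hg => ?_⟩, hbc, h1⟩
    by_contra! hg1
    obtain ⟨hg', hg1'⟩ := hab.extend hα hopt.1 hbc h1 hg
    exact (hbad _ hg').not_ge hg1'
  choose f hf using hnext
  obtain ⟨p, q, hq, hper⟩ := Finite.exists_iterate_eq_self f ⟨(a, b), hab, hbad⟩
  exact false_of_closed_walk hα hopt (A := fun t => (f^[t] p).1.1) (B := fun t => (f^[t] p).1.2)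
    hq (by simp [hper]) (fun t => (f^[t] p).2.1)
    (fun t => by simpa [Function.iterate_succ_apply'] using hf (f^[t] p))

theorem exists_isAugmenting_of_partner (hbc : Adj b c) (h1 : x b c = 1)
    (hM : ¬fixedMatching Adj w α c b) :
    ∃ g, IsAugmenting Adj w (earn Adj w α) x (Pi.single c 1) g := by
  rcases le_or_gt (earn Adj w α c) 0 with hc | hc
  · exact ⟨0, isAugmenting_zero_single hc⟩
  · obtain ⟨d, hcd⟩ := exists_isWalkEdge_of_partner hα hopt.1 hbc h1 hc hM
    obtain ⟨g, hg, -⟩ := exists_isAugmenting_of_isWalkEdge hα hopt hint hcd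
    exact ⟨g, hg⟩

/-- An unmatched node `i` with positive earnings starts an alternating walk; if `x` saturates
`i`, a second walk leaves from the LP partner of `i`, and the two are joined through that LP
edge. -/
theorem earn_eq_zero_of_unmatched (hi : ∀ j, ¬fixedMatching Adj w α i j) :
    earn Adj w α i = 0 := by
  by_contra hne
  have hpos : 0 < earn Adj w α i := lt_of_le_of_ne (earn_nonneg i) (Ne.symm hne)
  have hG := hα.graph
  have hdual : ∀ i j, Adj i j → w i j ≤ earn Adj w α i + earn Adj w α j :=
    fun i j h => hα.le_earn_add_earn h
  by_cases hsat : rowSums Adj x i = 1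
  · obtain ⟨u, hiu, h1⟩ := exists_eq_one_of_rowSums_eq_one hint hsat
    obtain ⟨k, hku, hik, ht, hk⟩ := hα.exists_tight_unmatched hi hpos u
    have hik1 : x i k ≠ 1 := fun h => hku (hopt.1.eq_of_eq_one hik h hiu h1)
    obtain ⟨gR, hR, hR1⟩ :=
      exists_isAugmenting_of_isWalkEdge hα hopt hint (⟨hik, ht, hik1, Or.inr hk⟩ :
        IsWalkEdge Adj w α x i k)
    obtain ⟨gL, hL⟩ :=
      exists_isAugmenting_of_partner hα hopt hint hiu h1 fun h => hi u (hα.fixedMatching_symm h)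
    have hback := (isAugmenting_neg_edgeInd hiu (hG.adj_symm hiu) (hG.ne_of_adj hiu)
      (hopt.1.1 u i) h1).add hL
    have hg := hR.add hback
    have hs : (Pi.single i 1 + (-(Pi.single i 1 + Pi.single u 1) + Pi.single u 1) : V → ℝ) = 0 := by
      abel
    rw [hs] at hg
    refine hg.false_of_isUniqueOpt hopt (fun _ _ => hG.adj_symm) hdual ⟨i, k, hik, ne_of_gt ?_⟩
    have := hback.nonneg hik1
    simp only [Pi.add_apply] at this ⊢
    linarith
  · obtain ⟨k, -, hik, ht, hk⟩ := hα.exists_tight_unmatched hi hpos i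
    obtain ⟨g, hg, hg1⟩ := exists_isAugmenting_of_isWalkEdge hα hopt hint
      (⟨hik, ht, fun h => hsat (hopt.1.rowSums_eq_one hik h), Or.inr hk⟩ :
        IsWalkEdge Adj w α x i k)
    have hg0 : IsAugmenting Adj w (earn Adj w α) x 0 g := by
      refine hg.mono (fun v hv => ?_) (by simp [dotProduct_single, earn_nonneg])
      have hvi : v ≠ i := by rintro rfl; exact hsat hv
      simp [hvi]
    exact hg0.false_of_isUniqueOpt hopt (fun _ _ => hG.adj_symm) hdual ⟨i, k, hik, by linarith⟩

end UniqueOpt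

end

theorem stmt2_general {V : Type*} [Fintype V] [DecidableEq V]
    (Adj : V → V → Prop) [DecidableRel Adj] (w : V → V → ℝ)
    (hG : GoodGraph Adj w) (κ : ℝ) (hκ : κ ∈ Set.Ioo (0 : ℝ) 1)
    (xstar : V → V → ℝ) (hfeas : LPFeasible Adj xstar)
    (hint : ∀ i j, Adj i j → xstar i j = 0 ∨ xstar i j = 1)
    (huniq : ∀ x, LPFeasible Adj x → (∃ i j, Adj i j ∧ x i j ≠ xstar i j) →
      LPobj Adj w x < LPobj Adj w xstar)
    (α : V → V → ℝ) (hfp : IsFixedPoint Adj w κ α) :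
    ∃ M : V → V → Prop, IsNBSolution Adj M w (earn Adj w α) := by
  have hα : IsFixedMsg Adj w α := ⟨hG, fun i j h => hfp.bestAlt_eq hκ.1.ne' h⟩
  exact ⟨_, hα.isNBSolution fun i hi => earn_eq_zero_of_unmatched hα ⟨hfeas, huniq⟩ hint hi⟩

/-- If the LP relaxation of maximum weight matching admits a unique optimum and this
optimum is integral, then the earnings vector `γ` of any fixed point of the natural
dynamics is the allocation of a Nash bargaining solution. -/
theorem stmt2 {V : Type*} [Fintype V] [DecidableEq V]
    (Adj : V → V → Prop) [DecidableRel Adj] (w : V → V → ℝ)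
    (hG : GoodGraph Adj w) (κ : ℝ) (hκ : κ ∈ Set.Ioo (0 : ℝ) 1)
    (xstar : V → V → ℝ) (hfeas : LPFeasible Adj xstar)
    (hint : ∀ i j, Adj i j → xstar i j = 0 ∨ xstar i j = 1)
    (hopt : ∀ x, LPFeasible Adj x → LPobj Adj w x ≤ LPobj Adj w xstar)
    (huniq : ∀ x, LPFeasible Adj x → (∃ i j, Adj i j ∧ x i j ≠ xstar i j) →
      LPobj Adj w x < LPobj Adj w xstar)
    (α : V → V → ℝ) (hvalid : ValidMsg Adj w α) (hfp : IsFixedPoint Adj w κ α) :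
    ∃ M : V → V → Prop, IsNBSolution Adj M w (earn Adj w α) :=
  stmt2_general Adj w hG κ hκ xstar hfeas hint huniq α hfp
end

section
/- Suppose the LP relaxation of maximum weight matching on G admits a unique optimum and this optimum is integral. Then every Nash bargaining solution (M, γ_NB) corresponds to a fixed point of the natural dynamics: the message vector α defined by α_{i→j} = max_{k∈∂i∖{j}} (w_{ik} − γ_{NB,k})_+ is a fixed point of the natural dynamics, its offers are m_{i→j} = (w_{ij} − γ_{NB,i})_+, and its earnings vector γ equals γ_NB. -/
open Finset Filter Topology

/-- Conversely: under the unique integral LP optimum assumption, every Nash bargaining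
solution `(M, γ_NB)` yields a fixed point of the natural dynamics via
`α_{i→j} = max_{k∈∂i∖{j}} (w_{ik} − γ_{NB,k})₊`, with offers `(w_{ij} − γ_{NB,i})₊`
and earnings vector equal to `γ_NB`. -/
theorem stmt3 {V : Type*} [Fintype V] [DecidableEq V]
    (Adj : V → V → Prop) [DecidableRel Adj] (w : V → V → ℝ)
    (hG : GoodGraph Adj w) (κ : ℝ) (hκ : κ ∈ Set.Ioo (0 : ℝ) 1)
    (xstar : V → V → ℝ) (hfeas : LPFeasible Adj xstar)
    (hint : ∀ i j, Adj i j → xstar i j = 0 ∨ xstar i j = 1)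
    (hopt : ∀ x, LPFeasible Adj x → LPobj Adj w x ≤ LPobj Adj w xstar)
    (huniq : ∀ x, LPFeasible Adj x → (∃ i j, Adj i j ∧ x i j ≠ xstar i j) →
      LPobj Adj w x < LPobj Adj w xstar)
    (M : V → V → Prop) (γNB : V → ℝ) (hNB : IsNBSolution Adj M w γNB) :
    IsFixedPoint Adj w κ (bestAltGamma Adj w γNB) ∧
    (∀ i j, Adj i j →
      offer w (bestAltGamma Adj w γNB) i j = max (w i j - γNB i) 0) ∧
    (∀ i, earn Adj w (bestAltGamma Adj w γNB) i = γNB i) := by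
  classical
  obtain ⟨hAdjSymm, hIrr, hwSymm, hwPos⟩ := hG
  obtain ⟨⟨hMAdj, hMSymm, hMuniq⟩, hγpos, hMsum, hunm, hstab, hbal⟩ := hNB
  -- every edge satisfies w ij ≤ γ i + γ j
  have hedge : ∀ i j, Adj i j → w i j ≤ γNB i + γNB j := by
    intro i j hij
    by_cases hM : M i j
    · exact (hMsum i j hM).ge
    · exact hstab i j hij hM
  have hub : ∀ i j, bestAltGamma Adj w γNB i j ≤ γNB i := by
    intro i j
    rw [bestAltGamma, Finset.fold_max_le]
    refine ⟨hγpos i, fun k hk => ?_⟩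
    simp only [Finset.mem_filter] at hk
    have := hedge i k hk.2.1
    simp only [max_le_iff]
    exact ⟨by linarith, hγpos i⟩
  have hnn : ∀ i j, 0 ≤ bestAltGamma Adj w γNB i j := by
    intro i j
    rw [bestAltGamma, Finset.le_fold_max]
    exact Or.inl le_rfl
  have heq : ∀ i j, ¬ M i j → bestAltGamma Adj w γNB i j = γNB i := by
    intro i j hM
    refine le_antisymm (hub i j) ?_
    by_cases hm : ∃ j₀, M i j₀
    · obtain ⟨j₀, hj₀⟩ := hm
      rw [bestAltGamma, Finset.le_fold_max]
      right
      refine ⟨j₀, ?_, ?_⟩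
      · simp only [Finset.mem_filter]
        exact ⟨Finset.mem_univ _, hMAdj i j₀ hj₀, fun h => hM (h ▸ hj₀)⟩
      · have hs := hMsum i j₀ hj₀
        have h' : w i j₀ - γNB j₀ = γNB i := by linarith
        rw [h']
        exact le_max_left _ _
    · push_neg at hm
      rw [hunm i hm]
      exact hnn i j
  have hoffer : ∀ i j, Adj i j →
      offer w (bestAltGamma Adj w γNB) i j = max (w i j - γNB i) 0 := by
    intro i j hij
    by_cases hM : M i j
    · have hsum := hMsum i j hM
      have hbal' := hbal i j hM
      have h1 := hub i j
      have h2 := hub j i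
      have hγi := hγpos i
      have hγj := hγpos j
      rw [offer]
      set a := bestAltGamma Adj w γNB i j
      set b := bestAltGamma Adj w γNB j i
      have e1 : max (w i j - a) 0 = w i j - a := max_eq_left (by linarith)
      have e2 : max (w i j - a - b) 0 = w i j - a - b := max_eq_left (by linarith)
      have e3 : max (w i j - γNB i) 0 = w i j - γNB i := max_eq_left (by linarith)
      rw [e1, e2, e3]
      linarith
    · have ha := heq i j hM
      have hb := heq j i (fun h => hM (hMSymm j i h))
      rw [offer, ha, hb]
      have h0 : max (w i j - γNB i - γNB j) 0 = 0 :=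
        max_eq_right (by have := hstab i j hij hM; linarith)
      rw [h0]
      ring
  have hbestAlt : ∀ i j, bestAlt Adj w (bestAltGamma Adj w γNB) i j
      = bestAltGamma Adj w γNB i j := by
    intro i j
    rw [bestAlt, bestAltGamma]
    apply Finset.fold_congr
    intro k hk
    simp only [Finset.mem_filter] at hk
    rw [hoffer k i (hAdjSymm i k hk.2.1), hwSymm k i]
  have hearn : ∀ i, earn Adj w (bestAltGamma Adj w γNB) i = γNB i := by
    intro i
    rw [earn]
    have hterm : ∀ k ∈ Finset.univ.filter (fun k => Adj i k),
        offer w (bestAltGamma Adj w γNB) k i = max (w i k - γNB k) 0 := by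
      intro k hk
      simp only [Finset.mem_filter] at hk
      rw [hoffer k i (hAdjSymm i k hk.2), hwSymm k i]
    rw [Finset.fold_congr hterm]
    apply le_antisymm
    · rw [Finset.fold_max_le]
      refine ⟨hγpos i, fun k hk => ?_⟩
      simp only [Finset.mem_filter] at hk
      have := hedge i k hk.2
      simp only [max_le_iff]
      exact ⟨by linarith, hγpos i⟩
    · by_cases hm : ∃ j₀, M i j₀
      · obtain ⟨j₀, hj₀⟩ := hm
        rw [Finset.le_fold_max]
        right
        refine ⟨j₀, ?_, ?_⟩
        · simp only [Finset.mem_filter]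
          exact ⟨Finset.mem_univ _, hMAdj i j₀ hj₀⟩
        · have hs := hMsum i j₀ hj₀
          have h' : w i j₀ - γNB j₀ = γNB i := by linarith
          rw [h']
          exact le_max_left _ _
      · push_neg at hm
        rw [hunm i hm, Finset.le_fold_max]
        exact Or.inl le_rfl
  refine ⟨?_, fun i j hij => hoffer i j hij, hearn⟩
  intro i j hij
  rw [step, hbestAlt]
  ring
end

section
/- Let G be bipartite with parts V_B and V_S. If two initial message vectors satisfy α⁰ ⪰ β⁰ in the bipartite partial ordering, then the natural dynamics preserves the ordering: α^t ⪰ β^t for all t ≥ 0. -/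
open Finset Filter Topology

/-- `G` is bipartite with buyers `isB` and sellers the complement: every edge joins
a buyer and a seller. -/
def Bipartite {V : Type*} (Adj : V → V → Prop) (isB : V → Prop) : Prop :=
  ∀ i j, Adj i j → (isB i ↔ ¬isB j)

/-- The bipartite partial ordering `α ⪰ β`: for every edge `(i, j')` with `i` a buyer
and `j'` a seller, `α_{i→j'} ≥ β_{i→j'}` and `α_{j'→i} ≤ β_{j'→i}`. -/
def DomGE {V : Type*} (Adj : V → V → Prop) (isB : V → Prop) (α β : V → V → ℝ) : Prop :=
  ∀ i j, Adj i j → isB i → ¬isB j → β i j ≤ α i j ∧ α j i ≤ β j i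


lemma half_lemma (x y c : ℝ) (hc : 0 ≤ c) (hxy : y ≤ x) :
    max y 0 - (1/2) * max (y - c) 0 ≤ max x 0 - (1/2) * max (x - c) 0 := by
  simp only [max_def]
  split_ifs <;> linarith

lemma offer_mono' (wv a a' b b' : ℝ) (hb' : 0 ≤ b') (ha : a ≤ a') (hb : b' ≤ b) :
    max (wv - a') 0 - (1/2) * max (wv - a' - b') 0 ≤
      max (wv - a) 0 - (1/2) * max (wv - a - b) 0 := by
  have h1 : max (wv - a - b) 0 ≤ max (wv - a - b') 0 :=
    max_le_max (by linarith) le_rfl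
  have h2 := half_lemma (wv - a) (wv - a') b' hb' (by linarith)
  have h3 : (wv - a) - b' = wv - a - b' := by ring
  have h4 : (wv - a') - b' = wv - a' - b' := by ring
  rw [h3, h4] at h2
  linarith

lemma fold_max_nonneg {V : Type*} (s : Finset V) (f : V → ℝ) : 0 ≤ s.fold max 0 f :=
  (Finset.le_fold_max _).mpr (Or.inl le_rfl)

lemma fold_max_mono {V : Type*} (s : Finset V) (f g : V → ℝ) (h : ∀ x ∈ s, f x ≤ g x) :
    s.fold max 0 f ≤ s.fold max 0 g := by
  rw [Finset.fold_max_le]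
  exact ⟨fold_max_nonneg s g, fun x hx => (Finset.le_fold_max _).mpr (Or.inr ⟨x, hx, h x hx⟩)⟩

/-- On a bipartite graph, the natural dynamics preserves the bipartite partial
ordering: if `α⁰ ⪰ β⁰` then `α^t ⪰ β^t` for all `t ≥ 0`. -/
theorem stmt4 {V : Type*} [Fintype V] [DecidableEq V]
    (Adj : V → V → Prop) [DecidableRel Adj] (w : V → V → ℝ)
    (hG : GoodGraph Adj w) (isB : V → Prop) (hbip : Bipartite Adj isB)
    (κ : ℝ) (hκ : κ ∈ Set.Ioo (0 : ℝ) 1)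
    (α0 β0 : V → V → ℝ)
    (hα0 : ∀ i j, Adj i j → 0 ≤ α0 i j) (hβ0 : ∀ i j, Adj i j → 0 ≤ β0 i j)
    (h : DomGE Adj isB α0 β0) :
    ∀ t : ℕ, DomGE Adj isB ((step Adj w κ)^[t] α0) ((step Adj w κ)^[t] β0) := by
  obtain ⟨hsym, -, -, -⟩ := hG
  obtain ⟨hκ0, hκ1⟩ := hκ
  suffices H : ∀ t : ℕ,
      (∀ i j, Adj i j → 0 ≤ (step Adj w κ)^[t] α0 i j) ∧
      (∀ i j, Adj i j → 0 ≤ (step Adj w κ)^[t] β0 i j) ∧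
      DomGE Adj isB ((step Adj w κ)^[t] α0) ((step Adj w κ)^[t] β0) by
    exact fun t => (H t).2.2
  intro t
  induction t with
  | zero => simpa using ⟨hα0, hβ0, h⟩
  | succ t ih =>
    obtain ⟨hα, hβ, hd⟩ := ih
    set A := (step Adj w κ)^[t] α0 with hA
    set B := (step Adj w κ)^[t] β0 with hB
    simp only [Function.iterate_succ_apply']
    rw [← hA, ← hB]
    refine ⟨?_, ?_, ?_⟩
    · intro i j hij
      have h1 : 0 ≤ bestAlt Adj w A i j := fold_max_nonneg _ _
      have h2 := hα i j hij
      unfold step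
      nlinarith
    · intro i j hij
      have h1 : 0 ≤ bestAlt Adj w B i j := fold_max_nonneg _ _
      have h2 := hβ i j hij
      unfold step
      nlinarith
    · intro i j hij hBi hBj
      constructor
      · have hball : bestAlt Adj w B i j ≤ bestAlt Adj w A i j := by
          apply fold_max_mono
          intro k hk
          simp only [Finset.mem_filter, Finset.mem_univ, true_and] at hk
          have hik : Adj i k := hk.1
          have hBk : ¬isB k := (hbip i k hik).mp hBi
          obtain ⟨h1, h2⟩ := hd i k hik hBi hBk
          have hb' : 0 ≤ B i k := hβ i k hik
          unfold offer
          exact offer_mono' (w k i) (A k i) (B k i) (A i k) (B i k) hb' h2 h1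
        have hij' := (hd i j hij hBi hBj).1
        unfold step
        nlinarith
      · have hball : bestAlt Adj w A j i ≤ bestAlt Adj w B j i := by
          apply fold_max_mono
          intro k hk
          simp only [Finset.mem_filter, Finset.mem_univ, true_and] at hk
          have hjk : Adj j k := hk.1
          have hBk : isB k := by
            have := hbip j k hjk
            tauto
          obtain ⟨h1, h2⟩ := hd k j (hsym j k hjk) hBk hBj
          have hb' : 0 ≤ A j k := hα j k hjk
          unfold offer
          exact offer_mono' (w k j) (B k j) (A k j) (B j k) (A j k) hb' h1 h2
        have hij' := (hd i j hij hBi hBj).2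
        unfold step
        nlinarith
end

section
/- Let G be bipartite with parts V_B and V_S, and let α⁰ ∈ [0,W]^{2|E|} be an initial message vector such that α⁰ ⪰ α¹, where α¹ is obtained from α⁰ by one step of the natural dynamics. Then the trajectory α^t of the natural dynamics converges as t → ∞ to some fixed point α* of the natural dynamics. -/
open Finset Filter Topology

/-!
The update is monotone for the bipartite order `⪰`: an offer decreases in the message it answers
to and increases in the message sent back (as long as that one is nonnegative), and on a bipartite
graph every buyer's offers come from sellers and vice versa. Hence `α⁰ ⪰ α¹` propagates to
`αᵗ ⪰ αᵗ⁺¹` for all `t`: buyer-to-seller messages decrease and seller-to-buyer messages increase,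
all inside `[0, W]`. By monotone convergence every message converges, and since the update is
continuous in the messages along edges, the limit is a fixed point.
-/

section FoldMax

variable {ι α : Type*} [LinearOrder α] (s : Finset ι) (b : α)

theorem Finset.fold_max_le_fold_max {f g : ι → α} (h : ∀ k ∈ s, f k ≤ g k) :
    s.fold max b f ≤ s.fold max b g :=
  (fold_max_le _).mpr ⟨(le_fold_max _).mpr (Or.inl le_rfl),
    fun k hk => (h k hk).trans ((le_fold_max _).mpr (Or.inr ⟨k, hk, le_rfl⟩))⟩

theorem Filter.Tendsto.finset_fold_max [TopologicalSpace α] [OrderClosedTopology α]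
    {κ : Type*} {l : Filter κ} {f : κ → ι → α} {g : ι → α}
    (h : ∀ k ∈ s, Tendsto (fun t => f t k) l (𝓝 (g k))) :
    Tendsto (fun t => s.fold max b (f t)) l (𝓝 (s.fold max b g)) := by
  classical
  induction s using Finset.induction with
  | empty => exact tendsto_const_nhds
  | insert a s ha ih =>
    simp only [fold_insert ha]
    exact (h a (mem_insert_self a s)).max (ih fun k hk => h k (mem_insert_of_mem hk))

end FoldMax

theorem offer_le_offer {V : Type*} {w α β : V → V → ℝ} {k i : V} (hki : β k i ≤ α k i)
    (hik : α i k ≤ β i k) (hik0 : 0 ≤ α i k) : offer w α k i ≤ offer w β k i := by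
  unfold offer
  rcases max_cases (w k i - α k i) 0 with ⟨h1, h1'⟩ | ⟨h1, h1'⟩ <;>
  rcases max_cases (w k i - β k i) 0 with ⟨h2, h2'⟩ | ⟨h2, h2'⟩ <;>
  rcases max_cases (w k i - α k i - α i k) 0 with ⟨h3, h3'⟩ | ⟨h3, h3'⟩ <;>
  rcases max_cases (w k i - β k i - β i k) 0 with ⟨h4, h4'⟩ | ⟨h4, h4'⟩ <;>
  linarith

section Dynamics

variable {V : Type*} [Fintype V] {Adj : V → V → Prop} [DecidableRel Adj] {w : V → V → ℝ}
  {isB : V → Prop}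

theorem maxW_nonneg : 0 ≤ maxW Adj w :=
  (le_fold_max _).mpr (Or.inl le_rfl)

theorem le_maxW {i j : V} (hij : Adj i j) : w i j ≤ maxW Adj w :=
  (le_fold_max _).mpr (Or.inr ⟨(i, j), by simpa using hij, le_rfl⟩)

theorem offer_le_maxW {α : V → V → ℝ} {k i : V} (hki : Adj k i) (h0 : 0 ≤ α k i) :
    offer w α k i ≤ maxW Adj w := by
  have h1 : max (w k i - α k i) 0 ≤ maxW Adj w :=
    max_le (by linarith [le_maxW (w := w) hki]) maxW_nonneg
  have h2 : 0 ≤ max (w k i - α k i - α i k) 0 := le_max_right _ _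
  unfold offer
  linarith

theorem exists_tendsto_of_domGE_succ (hsymm : ∀ i j, Adj i j → Adj j i)
    (hbip : Bipartite Adj isB) {α : ℕ → V → V → ℝ} (hα : ∀ t, ValidMsg Adj w (α t))
    (hdom : ∀ t, DomGE Adj isB (α t) (α (t + 1))) {i j : V} (hij : Adj i j) :
    ∃ l, Tendsto (fun t => α t i j) atTop (𝓝 l) := by
  by_cases hi : isB i
  · have hanti : Antitone fun t => α t i j :=
      antitone_nat_of_succ_le fun t => (hdom t i j hij hi ((hbip i j hij).mp hi)).1
    exact ⟨_, tendsto_atTop_ciInf hanti ⟨0, by rintro _ ⟨t, rfl⟩; exact (hα t i j hij).1⟩⟩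
  · have hj : isB j := not_not.mp (mt (hbip i j hij).mpr hi)
    have hmono : Monotone fun t => α t i j :=
      monotone_nat_of_le_succ fun t => (hdom t j i (hsymm _ _ hij) hj hi).2
    exact ⟨_, tendsto_atTop_ciSup hmono ⟨_, by rintro _ ⟨t, rfl⟩; exact (hα t i j hij).2⟩⟩

variable [DecidableEq V] {κ : ℝ}

theorem bestAlt_nonneg (α : V → V → ℝ) (i j : V) : 0 ≤ bestAlt Adj w α i j :=
  (le_fold_max _).mpr (Or.inl le_rfl)

theorem bestAlt_le_maxW (hsymm : ∀ i j, Adj i j → Adj j i) {α : V → V → ℝ} (hα : ValidMsg Adj w α)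
    (i j : V) : bestAlt Adj w α i j ≤ maxW Adj w :=
  (fold_max_le _).mpr ⟨maxW_nonneg, fun k hk => by
    have hik : Adj i k := (mem_filter.mp hk).2.1
    exact offer_le_maxW (hsymm _ _ hik) (hα k i (hsymm _ _ hik)).1⟩

theorem bestAlt_le_bestAlt {α β : V → V → ℝ} {i j : V}
    (h : ∀ k, Adj i k → offer w β k i ≤ offer w α k i) :
    bestAlt Adj w β i j ≤ bestAlt Adj w α i j :=
  fold_max_le_fold_max _ _ fun k hk => h k (mem_filter.mp hk).2.1

theorem step_le_step (hκ0 : 0 ≤ κ) (hκ1 : κ ≤ 1) {α β : V → V → ℝ} {i j : V}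
    (hb : bestAlt Adj w β i j ≤ bestAlt Adj w α i j) (h : β i j ≤ α i j) :
    step Adj w κ β i j ≤ step Adj w κ α i j := by
  have : 0 ≤ 1 - κ := by linarith
  unfold step
  gcongr

theorem validMsg_step (hsymm : ∀ i j, Adj i j → Adj j i) (hκ0 : 0 ≤ κ) (hκ1 : κ ≤ 1)
    {α : V → V → ℝ} (hα : ValidMsg Adj w α) : ValidMsg Adj w (step Adj w κ α) := fun i j hij =>
  convex_Icc 0 (maxW Adj w) ⟨bestAlt_nonneg α i j, bestAlt_le_maxW hsymm hα i j⟩ (hα i j hij)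
    hκ0 (by linarith) (by ring)

theorem domGE_step (hsymm : ∀ i j, Adj i j → Adj j i) (hbip : Bipartite Adj isB)
    (hκ0 : 0 ≤ κ) (hκ1 : κ ≤ 1) {α β : V → V → ℝ} (hα : ValidMsg Adj w α)
    (hβ : ValidMsg Adj w β) (h : DomGE Adj isB α β) :
    DomGE Adj isB (step Adj w κ α) (step Adj w κ β) := by
  intro i j hij hi hj
  refine ⟨step_le_step hκ0 hκ1 (bestAlt_le_bestAlt fun k hik => ?_) (h i j hij hi hj).1,
    step_le_step hκ0 hκ1 (bestAlt_le_bestAlt fun k hjk => ?_) (h i j hij hi hj).2⟩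
  · have hk : ¬isB k := (hbip i k hik).mp hi
    exact offer_le_offer (h i k hik hi hk).2 (h i k hik hi hk).1 (hβ i k hik).1
  · have hk : isB k := not_not.mp (mt (hbip j k hjk).mpr hj)
    obtain ⟨hkj, hjk'⟩ := h k j (hsymm _ _ hjk) hk hj
    exact offer_le_offer hkj hjk' (hα j k hjk).1

theorem validMsg_iterate_step (hsymm : ∀ i j, Adj i j → Adj j i) (hκ0 : 0 ≤ κ) (hκ1 : κ ≤ 1)
    {α : V → V → ℝ} (hα : ValidMsg Adj w α) (t : ℕ) :
    ValidMsg Adj w ((step Adj w κ)^[t] α) := by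
  induction t with
  | zero => exact hα
  | succ t ih => simpa only [Function.iterate_succ_apply'] using validMsg_step hsymm hκ0 hκ1 ih

theorem domGE_iterate_step (hsymm : ∀ i j, Adj i j → Adj j i) (hbip : Bipartite Adj isB)
    (hκ0 : 0 ≤ κ) (hκ1 : κ ≤ 1) {α : V → V → ℝ} (hα : ValidMsg Adj w α)
    (h : DomGE Adj isB α (step Adj w κ α)) (t : ℕ) :
    DomGE Adj isB ((step Adj w κ)^[t] α) ((step Adj w κ)^[t + 1] α) := by
  induction t with
  | zero => exact h
  | succ t ih =>
    simpa only [Function.iterate_succ_apply'] using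
      domGE_step hsymm hbip hκ0 hκ1 (validMsg_iterate_step hsymm hκ0 hκ1 hα t)
        (validMsg_iterate_step hsymm hκ0 hκ1 hα (t + 1)) ih

theorem tendsto_step_apply (hsymm : ∀ i j, Adj i j → Adj j i) {ι : Type*} {l : Filter ι}
    {α : ι → V → V → ℝ} {β : V → V → ℝ}
    (h : ∀ i j, Adj i j → Tendsto (fun t => α t i j) l (𝓝 (β i j))) {i j : V} (hij : Adj i j) :
    Tendsto (fun t => step Adj w κ (α t) i j) l (𝓝 (step Adj w κ β i j)) := by
  have hoffer : ∀ k, Adj i k → Tendsto (fun t => offer w (α t) k i) l (𝓝 (offer w β k i)) :=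
    fun k hik =>
      ((tendsto_const_nhds.sub (h k i (hsymm _ _ hik))).max tendsto_const_nhds).sub
        ((((tendsto_const_nhds.sub (h k i (hsymm _ _ hik))).sub (h i k hik)).max
          tendsto_const_nhds).const_mul _)
  have hbest : Tendsto (fun t => bestAlt Adj w (α t) i j) l (𝓝 (bestAlt Adj w β i j)) :=
    Tendsto.finset_fold_max _ _ fun k hk => hoffer k (mem_filter.mp hk).2.1
  exact (hbest.const_mul κ).add ((h i j hij).const_mul (1 - κ))

theorem isFixedPoint_of_tendsto_iterate (hsymm : ∀ i j, Adj i j → Adj j i) {α β : V → V → ℝ}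
    (h : ∀ i j, Adj i j → Tendsto (fun t => (step Adj w κ)^[t] α i j) atTop (𝓝 (β i j))) :
    IsFixedPoint Adj w κ β := fun i j hij =>
  tendsto_nhds_unique (tendsto_step_apply hsymm h hij) <| by
    simpa only [Function.iterate_succ_apply', Function.comp_def] using
      (h i j hij).comp (tendsto_add_atTop_nat 1)

end Dynamics

/-- On a bipartite graph, if the initial condition `α⁰ ∈ [0,W]^{2|E|}` satisfies
`α⁰ ⪰ α¹`, then the natural dynamics converges to some fixed point. -/
theorem stmt5 {V : Type*} [Fintype V] [DecidableEq V]
    (Adj : V → V → Prop) [DecidableRel Adj] (w : V → V → ℝ)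
    (hG : GoodGraph Adj w) (isB : V → Prop) (hbip : Bipartite Adj isB)
    (κ : ℝ) (hκ : κ ∈ Set.Ioo (0 : ℝ) 1)
    (α0 : V → V → ℝ) (hvalid : ValidMsg Adj w α0)
    (h : DomGE Adj isB α0 (step Adj w κ α0)) :
    ∃ αstar : V → V → ℝ, IsFixedPoint Adj w κ αstar ∧
      ∀ i j, Adj i j →
        Filter.Tendsto (fun t : ℕ => (step Adj w κ)^[t] α0 i j)
          Filter.atTop (nhds (αstar i j)) := by
  obtain ⟨hsymm, -⟩ := hG
  have hκ0 : 0 ≤ κ := hκ.1.le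
  have hκ1 : κ ≤ 1 := hκ.2.le
  have hconv : ∀ i j, Adj i j → Tendsto (fun t => (step Adj w κ)^[t] α0 i j) atTop
      (𝓝 (limUnder atTop fun t => (step Adj w κ)^[t] α0 i j)) := fun i j hij =>
    tendsto_nhds_limUnder <| exists_tendsto_of_domGE_succ hsymm hbip
      (validMsg_iterate_step hsymm hκ0 hκ1 hvalid)
      (domGE_iterate_step hsymm hbip hκ0 hκ1 hvalid h) hij
  exact ⟨_, isFixedPoint_of_tendsto_iterate hsymm hconv, hconv⟩
end

section
/- Let (α, m, γ) be a fixed point of the natural dynamics. Then γ is feasible for the dual LP of maximum weight matching: γ_i ≥ 0 for all i ∈ V and γ_i + γ_j ≥ w_{ij} for all (i,j) ∈ E. -/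
open Finset Filter Topology

/-- At a fixed point of the natural dynamics, the earnings vector `γ` is feasible
for the dual LP of maximum weight matching. -/
theorem stmt7 {V : Type*} [Fintype V] [DecidableEq V]
    (Adj : V → V → Prop) [DecidableRel Adj] (w : V → V → ℝ)
    (hG : GoodGraph Adj w) (κ : ℝ) (hκ : κ ∈ Set.Ioo (0 : ℝ) 1)
    (α : V → V → ℝ) (hnn : ∀ i j, Adj i j → 0 ≤ α i j)
    (hfp : IsFixedPoint Adj w κ α) :
    (∀ i, 0 ≤ earn Adj w α i) ∧
    (∀ i j, Adj i j → w i j ≤ earn Adj w α i + earn Adj w α j) := by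
  obtain ⟨hsym, hirr, hwsym, hwpos⟩ := hG
  have hearn0 : ∀ i, 0 ≤ earn Adj w α i := fun i =>
    (Finset.le_fold_max _).mpr (Or.inl le_rfl)
  refine ⟨hearn0, fun i j hij => ?_⟩
  have hoff : ∀ i k, Adj i k → offer w α k i ≤ earn Adj w α i := by
    intro i k hik
    exact (Finset.le_fold_max _).mpr
      (Or.inr ⟨k, Finset.mem_filter.mpr ⟨Finset.mem_univ _, hik⟩, le_rfl⟩)
  have hba : ∀ i j, Adj i j → bestAlt Adj w α i j = α i j := by
    intro i j h
    have hs := hfp i j h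
    unfold step at hs
    have hκ0 := hκ.1
    nlinarith [hs]
  have hbe : ∀ i j, Adj i j → α i j ≤ earn Adj w α i := by
    intro i j h
    rw [← hba i j h]
    apply (Finset.fold_max_le _).mpr
    refine ⟨hearn0 i, fun k hk => ?_⟩
    rw [Finset.mem_filter] at hk
    exact hoff i k hk.2.1
  have hji : Adj j i := hsym i j hij
  set a := α i j
  set b := α j i
  have ha0 : 0 ≤ a := hnn i j hij
  have hb0 : 0 ≤ b := hnn j i hji
  by_cases hcase : w i j - a - b ≤ 0
  · have h1 : a ≤ earn Adj w α i := hbe i j hij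
    have h2 : b ≤ earn Adj w α j := hbe j i hji
    linarith
  · push_neg at hcase
    have h1 : offer w α j i ≤ earn Adj w α i := hoff i j hij
    have h2 : offer w α i j ≤ earn Adj w α j := hoff j i hji
    have hw : w j i = w i j := (hwsym i j).symm
    have e1 : offer w α j i = (w i j - b) - (1/2) * (w i j - b - a) := by
      unfold offer
      rw [hw]
      rw [max_eq_left (by linarith), max_eq_left (by linarith)]
    have e2 : offer w α i j = (w i j - a) - (1/2) * (w i j - a - b) := by
      unfold offer
      rw [max_eq_left (by linarith), max_eq_left (by linarith)]
    rw [e1] at h1; rw [e2] at h2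
    linarith
end

section
/- Let (α, m, γ) be a fixed point of the natural dynamics and let (i,j) ∈ E. Then the following three conditions are equivalent: (a) i and j are partners, i.e. γ_i + γ_j = w_{ij}; (b) w_{ij} − α_{i→j} − α_{j→i} ≥ 0; (c) γ_i = m_{j→i} and γ_j = m_{i→j}. Moreover, if γ_i = m_{j→i} and γ_j > m_{i→j}, then γ_i = 0. -/
open Finset Filter Topology

lemma earn_eq_max {V : Type*} [Fintype V] [DecidableEq V]
    (Adj : V → V → Prop) [DecidableRel Adj] (w α : V → V → ℝ) (i j : V)
    (hij : Adj i j) :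
    earn Adj w α i = max (offer w α j i) (bestAlt Adj w α i j) := by
  have hfilter : (Finset.univ.filter fun k => Adj i k ∧ k ≠ j)
      = (Finset.univ.filter fun k => Adj i k).erase j := by
    ext k; simp [Finset.mem_erase, and_comm]
  have hins : (Finset.univ.filter fun k => Adj i k)
      = insert j ((Finset.univ.filter fun k => Adj i k).erase j) :=
    (Finset.insert_erase (by simp [hij])).symm
  rw [earn, bestAlt, hfilter]
  conv_lhs => rw [hins]
  rw [Finset.fold_insert (Finset.notMem_erase _ _)]

lemma alpha_eq_bestAlt {V : Type*} [Fintype V] [DecidableEq V]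
    (Adj : V → V → Prop) [DecidableRel Adj] (w : V → V → ℝ) (κ : ℝ)
    (hκ : κ ∈ Set.Ioo (0 : ℝ) 1) (α : V → V → ℝ)
    (hfp : IsFixedPoint Adj w κ α) (i j : V) (hij : Adj i j) :
    α i j = bestAlt Adj w α i j := by
  have h := hfp i j hij
  unfold step at h
  have hκ0 : κ ≠ 0 := ne_of_gt hκ.1
  have : κ * bestAlt Adj w α i j = κ * α i j := by linarith
  exact ((mul_left_cancel₀ hκ0 this)).symm

lemma core_real (W a b gi gj mi mj : ℝ) (hW : 0 < W) (ha : 0 ≤ a) (hb : 0 ≤ b)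
    (hmj : mj = max (W - b) 0 - (1 / 2) * max (W - b - a) 0)
    (hmi : mi = max (W - a) 0 - (1 / 2) * max (W - a - b) 0)
    (hgi : gi = max mj a) (hgj : gj = max mi b) :
    ((gi + gj = W) ↔ (0 ≤ W - a - b)) ∧
    ((gi + gj = W) ↔ (gi = mj ∧ gj = mi)) ∧
    ((gi = mj ∧ mi < gj) → gi = 0) := by
  rcases le_or_gt 0 (W - a - b) with hs | hs
  · -- surplus nonnegative
    have h1 : max (W - b - a) 0 = W - b - a := max_eq_left (by linarith)
    have h2 : max (W - a - b) 0 = W - a - b := max_eq_left (by linarith)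
    have h3 : max (W - b) 0 = W - b := max_eq_left (by linarith)
    have h4 : max (W - a) 0 = W - a := max_eq_left (by linarith)
    have hmj' : mj = (W - b + a) / 2 := by rw [hmj, h1, h3]; ring
    have hmi' : mi = (W - a + b) / 2 := by rw [hmi, h2, h4]; ring
    have hgi' : gi = mj := by rw [hgi, max_eq_left (by rw [hmj']; linarith)]
    have hgj' : gj = mi := by rw [hgj, max_eq_left (by rw [hmi']; linarith)]
    refine ⟨⟨fun _ => hs, fun _ => by rw [hgi', hgj', hmj', hmi']; ring⟩,
      ⟨fun _ => ⟨hgi', hgj'⟩, fun _ => by rw [hgi', hgj', hmj', hmi']; ring⟩,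
      fun h => absurd (hgj' ▸ h.2) (lt_irrefl _)⟩
  · -- surplus negative
    have h1 : max (W - b - a) 0 = 0 := max_eq_right (by linarith)
    have h2 : max (W - a - b) 0 = 0 := max_eq_right (by linarith)
    have hmj' : mj = max (W - b) 0 := by rw [hmj, h1]; ring
    have hmi' : mi = max (W - a) 0 := by rw [hmi, h2]; ring
    have hgia : a ≤ gi := hgi ▸ le_max_right _ _
    have hgjb : b ≤ gj := hgj ▸ le_max_right _ _
    have hne : gi + gj ≠ W := by intro h; linarith
    have hnc : ¬(gi = mj ∧ gj = mi) := by
      rintro ⟨e1, e2⟩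
      rcases le_or_gt (W - b) 0 with hb0 | hb0
      · have : gi = 0 := by rw [e1, hmj', max_eq_right hb0]
        have ha0 : a = 0 := le_antisymm (this ▸ hgia) ha
        have : gj = W := by
          rw [e2, hmi', ha0, sub_zero, max_eq_left (le_of_lt hW)]
        linarith
      · have : gi = W - b := by rw [e1, hmj', max_eq_left (le_of_lt hb0)]
        linarith
    refine ⟨⟨fun h => absurd h hne, fun h => absurd h (not_le.mpr hs)⟩,
      ⟨fun h => absurd h hne, fun h => absurd h hnc⟩, ?_⟩
    rintro ⟨e1, hlt⟩
    have hgjb' : gj = b := by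
      rcases max_choice mi b with h | h
      · exact absurd (hgj ▸ h) (by intro hh; rw [hh] at hlt; exact lt_irrefl _ hlt)
      · exact hgj ▸ h
    rcases le_or_gt (W - b) 0 with hb0 | hb0
    · rw [e1, hmj', max_eq_right hb0]
    · have : gi = W - b := by rw [e1, hmj', max_eq_left (le_of_lt hb0)]
      linarith

/-- At a fixed point, for an edge `(i,j)`: `i` and `j` are partners iff
`w_{ij} − α_{i→j} − α_{j→i} ≥ 0` iff `γ_i = m_{j→i}` and `γ_j = m_{i→j}`.
Moreover, if `γ_i = m_{j→i}` and `γ_j > m_{i→j}`, then `γ_i = 0`. -/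
theorem stmt8 {V : Type*} [Fintype V] [DecidableEq V]
    (Adj : V → V → Prop) [DecidableRel Adj] (w : V → V → ℝ)
    (hG : GoodGraph Adj w) (κ : ℝ) (hκ : κ ∈ Set.Ioo (0 : ℝ) 1)
    (α : V → V → ℝ) (hnn : ∀ i j, Adj i j → 0 ≤ α i j)
    (hfp : IsFixedPoint Adj w κ α) (i j : V) (hij : Adj i j) :
    ((earn Adj w α i + earn Adj w α j = w i j) ↔
      (0 ≤ w i j - α i j - α j i)) ∧
    ((earn Adj w α i + earn Adj w α j = w i j) ↔
      (earn Adj w α i = offer w α j i ∧ earn Adj w α j = offer w α i j)) ∧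
    ((earn Adj w α i = offer w α j i ∧ offer w α i j < earn Adj w α j) →
      earn Adj w α i = 0) := by
  obtain ⟨hsym, hirr, hwsym, hwpos⟩ := hG
  have hji : Adj j i := hsym i j hij
  have hei : earn Adj w α i = max (offer w α j i) (α i j) := by
    rw [earn_eq_max Adj w α i j hij, ← alpha_eq_bestAlt Adj w κ hκ α hfp i j hij]
  have hej : earn Adj w α j = max (offer w α i j) (α j i) := by
    rw [earn_eq_max Adj w α j i hji, ← alpha_eq_bestAlt Adj w κ hκ α hfp j i hji]
  have hoji : offer w α j i = max (w i j - α j i) 0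
      - (1 / 2) * max (w i j - α j i - α i j) 0 := by
    rw [offer, hwsym j i]
  have hoij : offer w α i j = max (w i j - α i j) 0
      - (1 / 2) * max (w i j - α i j - α j i) 0 := rfl
  exact core_real (w i j) (α i j) (α j i) (earn Adj w α i) (earn Adj w α j)
    (offer w α i j) (offer w α j i) (hwpos i j hij) (hnn i j hij) (hnn j i hji)
    hoji hoij hei hej
end

section
/- Let (α, m, γ) be a fixed point of the natural dynamics. If node i has no adjacent dotted edge (i.e. every edge (i,j) incident to i satisfies w_{ij} − α_{i→j} − α_{j→i} < 0), then γ_i = 0. -/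
open Finset Filter Topology

/-- At a fixed point, if node `i` has no adjacent dotted edge
(every incident edge has `w_{ij} − α_{i→j} − α_{j→i} < 0`), then `γ_i = 0`. -/
theorem stmt10 {V : Type*} [Fintype V] [DecidableEq V]
    (Adj : V → V → Prop) [DecidableRel Adj] (w : V → V → ℝ)
    (hG : GoodGraph Adj w) (κ : ℝ) (hκ : κ ∈ Set.Ioo (0 : ℝ) 1)
    (α : V → V → ℝ) (hnn : ∀ i j, Adj i j → 0 ≤ α i j)
    (hfp : IsFixedPoint Adj w κ α) (i : V)
    (hnodot : ∀ j, Adj i j → w i j - α i j - α j i < 0) :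
    earn Adj w α i = 0 := by
  obtain ⟨hsym, hloop, hwsym, hwpos⟩ := hG
  obtain ⟨hκ0, hκ1⟩ := hκ
  have halt : ∀ j, Adj i j → bestAlt Adj w α i j = α i j := by
    intro j hj
    have h := hfp i j hj
    unfold step at h
    have h2 : κ * bestAlt Adj w α i j = κ * α i j := by linarith
    exact mul_left_cancel₀ (ne_of_gt hκ0) h2
  have h0 : 0 ≤ earn Adj w α i := by
    unfold earn
    exact (Finset.le_fold_max _).mpr (Or.inl le_rfl)
  by_contra hne
  have hgt : 0 < earn Adj w α i := lt_of_le_of_ne h0 (Ne.symm hne)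
  have hex : earn Adj w α i ≤ 0 ∨
      ∃ j ∈ Finset.univ.filter fun k => Adj i k, earn Adj w α i ≤ offer w α j i := by
    conv_lhs => unfold earn
    exact (Finset.le_fold_max _).mp le_rfl
  rcases hex with hle | ⟨j, hjS, hje⟩
  · linarith
  · have hji : Adj i j := by simpa using hjS
    have hdj : w j i - α j i - α i j < 0 := by
      have := hnodot j hji
      have hw := hwsym i j
      linarith
    have hoff : offer w α j i = max (w j i - α j i) 0 := by
      unfold offer
      rw [max_eq_right (le_of_lt hdj)]
      ring
    have hopos : 0 < offer w α j i := lt_of_lt_of_le hgt hje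
    have hmx : max (w j i - α j i) 0 = w j i - α j i := by
      rcases max_cases (w j i - α j i) 0 with ⟨h1, _⟩ | ⟨h1, h2⟩
      · exact h1
      · rw [hoff] at hopos; linarith
    have hlt : offer w α j i < α i j := by
      rw [hoff, hmx]; linarith
    have hba : bestAlt Adj w α i j ≤ earn Adj w α i := by
      unfold bestAlt
      rw [Finset.fold_max_le]
      refine ⟨h0, ?_⟩
      intro k hk
      simp only [Finset.mem_filter, Finset.mem_univ, true_and] at hk
      unfold earn
      exact (Finset.le_fold_max _).mpr (Or.inr ⟨k, by simp [hk.1], le_rfl⟩)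
    have := halt j hji
    linarith
end

section
/- Let (α, m, γ) be a fixed point of the natural dynamics and let (i,j) ∈ E. Then the following are equivalent: (a) α_{i→j} = γ_i; (b) w_{ij} − α_{i→j} − α_{j→i} ≤ 0; (c) m_{i→j} = (w_{ij} − α_{i→j})_+. In particular (since (c) is symmetric in i and j), α_{i→j} = γ_i holds if and only if α_{j→i} = γ_j holds. -/
open Finset Filter Topology

/-- At a fixed point, for an edge `(i,j)`: `α_{i→j} = γ_i` iff
`w_{ij} − α_{i→j} − α_{j→i} ≤ 0` iff `m_{i→j} = (w_{ij} − α_{i→j})₊`;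
in particular `α_{i→j} = γ_i` iff `α_{j→i} = γ_j`. -/
theorem stmt11 {V : Type*} [Fintype V] [DecidableEq V]
    (Adj : V → V → Prop) [DecidableRel Adj] (w : V → V → ℝ)
    (hG : GoodGraph Adj w) (κ : ℝ) (hκ : κ ∈ Set.Ioo (0 : ℝ) 1)
    (α : V → V → ℝ) (hnn : ∀ i j, Adj i j → 0 ≤ α i j)
    (hfp : IsFixedPoint Adj w κ α) (i j : V) (hij : Adj i j) :
    ((α i j = earn Adj w α i) ↔ (w i j - α i j - α j i ≤ 0)) ∧
    ((α i j = earn Adj w α i) ↔ (offer w α i j = max (w i j - α i j) 0)) ∧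
    ((α i j = earn Adj w α i) ↔ (α j i = earn Adj w α j)) := by

  obtain ⟨hsym, _hirr, hwsym, _hwpos⟩ := hG
  obtain ⟨hκ0, hκ1⟩ := hκ
  have hba : ∀ a b, Adj a b → bestAlt Adj w α a b = α a b := by
    intro a b hab
    have h := hfp a b hab
    unfold step at h
    have h2 : κ * bestAlt Adj w α a b = κ * α a b := by linear_combination h
    exact mul_left_cancel₀ (ne_of_gt hκ0) h2
  -- general key lemma for an edge (p,q)
  have key : ∀ p q, Adj p q →
      ((α p q = earn Adj w α p) ↔ (w p q - α p q - α q p ≤ 0)) := by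
    intro p q hpq
    have ha : 0 ≤ α p q := hnn p q hpq
    have hearn : earn Adj w α p = max (offer w α q p) (α p q) := by
      have hset : (Finset.univ.filter fun k => Adj p k) =
          insert q (Finset.univ.filter fun k => Adj p k ∧ k ≠ q) := by
        ext k
        simp only [Finset.mem_insert, Finset.mem_filter, Finset.mem_univ, true_and]
        constructor
        · intro h
          by_cases hk : k = q
          · exact Or.inl hk
          · exact Or.inr ⟨h, hk⟩
        · rintro (rfl | ⟨h, _⟩)
          exacts [hpq, h]
      have hq : q ∉ (Finset.univ.filter fun k => Adj p k ∧ k ≠ q) := by simp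
      rw [earn, hset, Finset.fold_insert hq]
      congr 1
      exact hba p q hpq
    have hAiff : (α p q = earn Adj w α p) ↔ offer w α q p ≤ α p q := by
      rw [hearn]
      constructor
      · intro h
        calc offer w α q p ≤ max (offer w α q p) (α p q) := le_max_left _ _
          _ = α p q := h.symm
      · intro h
        exact (max_eq_right h).symm
    rw [hAiff]
    have hw' : w q p = w p q := hwsym q p
    rw [offer, hw']
    constructor
    · intro h
      by_contra hpos
      push_neg at hpos
      have h1 : max (w p q - α q p - α p q) 0 = w p q - α q p - α p q :=
        max_eq_left (by linarith)
      have h2 : max (w p q - α q p) 0 = w p q - α q p := max_eq_left (by linarith)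
      rw [h1, h2] at h
      linarith
    · intro h
      have h1 : max (w p q - α q p - α p q) 0 = 0 := max_eq_right (by linarith)
      rw [h1]
      rcases le_or_gt (w p q - α q p) 0 with hb | hb
      · rw [max_eq_right hb]; linarith
      · rw [max_eq_left hb.le]; linarith
  have hciff : (w i j - α i j - α j i ≤ 0) ↔
      (offer w α i j = max (w i j - α i j) 0) := by
    rw [offer]
    constructor
    · intro h
      rw [max_eq_right h]; ring
    · intro h
      have hm : max (w i j - α i j - α j i) 0 = 0 := by linarith
      calc w i j - α i j - α j i ≤ max (w i j - α i j - α j i) 0 := le_max_left _ _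
        _ = 0 := hm
  have hji := hsym i j hij
  refine ⟨key i j hij, (key i j hij).trans hciff, ?_⟩
  rw [key i j hij, key j i hji, hwsym j i]
  constructor <;> intro h <;> linarith
end

section
/- Let (α, m, γ) be a fixed point of the natural dynamics. Then for every edge (i,j) ∈ E, the offer satisfies m_{i→j} = (w_{ij} − γ_i)_+. -/
open Finset Filter Topology

lemma arith12 (W a b : ℝ) (ha : 0 ≤ a) (hb : 0 ≤ b) :
    max (W - a) 0 - (1/2) * max (W - a - b) 0 =
      max (W - max (max (W - b) 0 - (1/2) * max (W - b - a) 0) a) 0 := by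
  rcases le_or_gt W (a + b) with h | h
  · rw [max_eq_right (by linarith : W - a - b ≤ 0),
        max_eq_right (by linarith : W - b - a ≤ 0)]
    ring_nf
    rcases le_total (W - b) 0 with h2 | h2
    · rw [max_eq_right h2, max_eq_right (by linarith : (0:ℝ) ≤ a)]
    · rw [max_eq_left h2]
      rcases le_total (W - b) a with h3 | h3
      · rw [max_eq_right h3]
      · have he : W - b = a := le_antisymm (by linarith) h3
        rw [max_eq_left h3, he]
  · have h1 : max (W - a - b) 0 = W - a - b := max_eq_left (by linarith)
    have h2 : max (W - b - a) 0 = W - b - a := max_eq_left (by linarith)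
    have h3 : max (W - a) 0 = W - a := max_eq_left (by linarith)
    have h4 : max (W - b) 0 = W - b := max_eq_left (by linarith)
    rw [h1, h2, h3, h4]
    have h5 : max (W - b - (1/2) * (W - b - a)) a = W - b - (1/2) * (W - b - a) :=
      max_eq_left (by linarith)
    rw [h5, max_eq_left (by linarith)]
    ring

/-- At a fixed point, every offer satisfies `m_{i→j} = (w_{ij} − γ_i)₊`. -/
theorem stmt12 {V : Type*} [Fintype V] [DecidableEq V]
    (Adj : V → V → Prop) [DecidableRel Adj] (w : V → V → ℝ)
    (hG : GoodGraph Adj w) (κ : ℝ) (hκ : κ ∈ Set.Ioo (0 : ℝ) 1)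
    (α : V → V → ℝ) (hnn : ∀ i j, Adj i j → 0 ≤ α i j)
    (hfp : IsFixedPoint Adj w κ α) :
    ∀ i j, Adj i j → offer w α i j = max (w i j - earn Adj w α i) 0 := by
  obtain ⟨hsym, -, hwsym, -⟩ := hG
  intro i j hij
  -- at a fixed point, α i j = bestAlt i j
  have hfix : ∀ i j, Adj i j → α i j = bestAlt Adj w α i j := by
    intro i j h
    have := hfp i j h
    unfold step at this
    have hκ0 : κ ≠ 0 := ne_of_gt hκ.1
    have : κ * bestAlt Adj w α i j = κ * α i j := by linarith
    exact (mul_left_cancel₀ hκ0 this).symm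
  -- earn i = max (offer j i) (α i j)
  have hearn : earn Adj w α i = max (offer w α j i) (α i j) := by
    have hset : (Finset.univ.filter fun k => Adj i k)
        = insert j (Finset.univ.filter fun k => Adj i k ∧ k ≠ j) := by
      ext k
      simp only [Finset.mem_filter, Finset.mem_univ, true_and, Finset.mem_insert]
      constructor
      · intro hk
        rcases eq_or_ne k j with rfl | hne
        · exact Or.inl rfl
        · exact Or.inr ⟨hk, hne⟩
      · rintro (rfl | ⟨hk, -⟩)
        · exact hij
        · exact hk
    unfold earn
    rw [hset, Finset.fold_insert (by simp)]
    rw [hfix i j hij]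
    rfl
  rw [hearn]
  unfold offer
  rw [hwsym j i, hfix i j hij, hfix j i (hsym _ _ hij)]
  exact arith12 (w i j) (bestAlt Adj w α i j) (bestAlt Adj w α j i)
    ((hfix i j hij) ▸ hnn i j hij) ((hfix j i (hsym _ _ hij)) ▸ hnn j i (hsym _ _ hij))
end

section
/- Let (α, m, γ) be a fixed point of the natural dynamics. Then the balance property holds at every edge: for all (i,j) ∈ E, γ_i − max_{k∈∂i∖{j}}(w_{ik} − γ_k)_+ = γ_j − max_{l∈∂j∖{i}}(w_{jl} − γ_l)_+, and both sides of this equation are non-negative. -/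
open Finset Filter Topology

private lemma key (w a b : ℝ) (ha : 0 ≤ a) (hb : 0 ≤ b) :
    max (w - max (max (w - b) 0 - 1/2 * max (w - b - a) 0) a) 0
      = max (w - a) 0 - 1/2 * max (w - a - b) 0 := by
  rcases le_or_gt (w - a - b) 0 with h | h
  · have h1 : max (w - a - b) 0 = 0 := max_eq_right h
    have h1' : max (w - b - a) 0 = 0 := max_eq_right (by linarith)
    rw [h1, h1']
    have e1 : max (w - b) 0 ≤ a := max_le (by linarith) ha
    rw [max_eq_right (by linarith : max (w - b) 0 - 1/2 * 0 ≤ a)]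
    ring
  · have h1 : max (w - a - b) 0 = w - a - b := max_eq_left h.le
    have h1' : max (w - b - a) 0 = w - b - a := max_eq_left (by linarith)
    have h2 : max (w - b) 0 = w - b := max_eq_left (by linarith)
    have h3 : max (w - a) 0 = w - a := max_eq_left (by linarith)
    rw [h1, h1', h2, h3]
    rw [max_eq_left (by linarith : a ≤ w - b - 1/2 * (w - b - a))]
    rw [max_eq_left (by linarith : (0:ℝ) ≤ w - (w - b - 1/2 * (w - b - a)))]
    ring

private lemma key2 (w a b : ℝ) (ha : 0 ≤ a) (hb : 0 ≤ b) :
    max (max (w - b) 0 - 1/2 * max (w - b - a) 0) a - a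
      = max (max (w - a) 0 - 1/2 * max (w - a - b) 0) b - b := by
  rcases le_or_gt (w - a - b) 0 with h | h
  · have h1 : max (w - a - b) 0 = 0 := max_eq_right h
    have h1' : max (w - b - a) 0 = 0 := max_eq_right (by linarith)
    rw [h1, h1']
    have e1 : max (w - b) 0 ≤ a := max_le (by linarith) ha
    have e2 : max (w - a) 0 ≤ b := max_le (by linarith) hb
    rw [max_eq_right (by linarith : max (w - b) 0 - 1/2 * 0 ≤ a),
        max_eq_right (by linarith : max (w - a) 0 - 1/2 * 0 ≤ b)]
    ring
  · have h1 : max (w - a - b) 0 = w - a - b := max_eq_left h.le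
    have h1' : max (w - b - a) 0 = w - b - a := max_eq_left (by linarith)
    have h2 : max (w - b) 0 = w - b := max_eq_left (by linarith)
    have h3 : max (w - a) 0 = w - a := max_eq_left (by linarith)
    rw [h1, h1', h2, h3]
    rw [max_eq_left (by linarith : a ≤ w - b - 1/2 * (w - b - a)),
        max_eq_left (by linarith : b ≤ w - a - 1/2 * (w - a - b))]
    ring

/-- At a fixed point, the balance property holds at every edge, with both sides
non-negative. -/
theorem stmt13 {V : Type*} [Fintype V] [DecidableEq V]
    (Adj : V → V → Prop) [DecidableRel Adj] (w : V → V → ℝ)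
    (hG : GoodGraph Adj w) (κ : ℝ) (hκ : κ ∈ Set.Ioo (0 : ℝ) 1)
    (α : V → V → ℝ) (hnn : ∀ i j, Adj i j → 0 ≤ α i j)
    (hfp : IsFixedPoint Adj w κ α) :
    ∀ i j, Adj i j →
      (earn Adj w α i - bestAltGamma Adj w (earn Adj w α) i j =
        earn Adj w α j - bestAltGamma Adj w (earn Adj w α) j i) ∧
      (0 ≤ earn Adj w α i - bestAltGamma Adj w (earn Adj w α) i j) := by
  obtain ⟨hsym, hirr, hwsym, hwpos⟩ := hG
  obtain ⟨hκ0, hκ1⟩ := hκ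
  have hα : ∀ i j, Adj i j → bestAlt Adj w α i j = α i j := by
    intro i j hij
    have h := hfp i j hij
    unfold step at h
    have h2 : κ * bestAlt Adj w α i j = κ * α i j := by linarith
    exact mul_left_cancel₀ (ne_of_gt hκ0) h2
  have hfilter : ∀ i j, Adj i j →
      (Finset.univ.filter fun k => Adj i k)
        = insert j (Finset.univ.filter fun k => Adj i k ∧ k ≠ j) := by
    intro i j hij
    ext k
    simp only [Finset.mem_insert, Finset.mem_filter, Finset.mem_univ, true_and]
    constructor
    · intro hk
      by_cases hkj : k = j
      · exact Or.inl hkj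
      · exact Or.inr ⟨hk, hkj⟩
    · rintro (rfl | ⟨hk, _⟩)
      · exact hij
      · exact hk
  have hearn : ∀ i j, Adj i j →
      earn Adj w α i = max (offer w α j i) (α i j) := by
    intro i j hij
    unfold earn
    rw [hfilter i j hij, Finset.fold_insert (by simp)]
    have hb : (Finset.univ.filter fun k => Adj i k ∧ k ≠ j).fold max 0
        (fun k => offer w α k i) = α i j := hα i j hij
    rw [hb]
  have hkey : ∀ i k, Adj i k → max (w i k - earn Adj w α k) 0 = offer w α k i := by
    intro i k hik
    have hki := hsym i k hik
    rw [hearn k i hki]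
    unfold offer
    rw [hwsym k i]
    exact key (w i k) (α k i) (α i k) (hnn k i hki) (hnn i k hik)
  have hBAG : ∀ i j, Adj i j → bestAltGamma Adj w (earn Adj w α) i j = α i j := by
    intro i j hij
    unfold bestAltGamma
    have hcong : (Finset.univ.filter fun k => Adj i k ∧ k ≠ j).fold max 0
        (fun k => max (w i k - earn Adj w α k) 0)
        = (Finset.univ.filter fun k => Adj i k ∧ k ≠ j).fold max 0
          (fun k => offer w α k i) := by
      apply Finset.fold_congr
      intro k hk
      simp only [Finset.mem_filter, Finset.mem_univ, true_and] at hk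
      exact hkey i k hk.1
    rw [hcong]
    exact hα i j hij
  intro i j hij
  have hji := hsym i j hij
  rw [hBAG i j hij, hBAG j i hji, hearn i j hij, hearn j i hji]
  constructor
  · unfold offer
    rw [hwsym j i]
    exact key2 (w i j) (α i j) (α j i) (hnn i j hij) (hnn j i hji)
  · have := le_max_right (offer w α j i) (α i j)
    linarith
end
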